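/- arXiv:2109.08127 — 9 statements merged into one kernel-verified Lean document; each statement's English description precedes it below -/
import Mathlib

section
/- If φ and ψ are Bessel sequences in H with Bessel bounds B_φ and B_ψ, and m ∈ ℓ^∞, then the multiplier M_{m,φ,ψ} f = Σ_n m_n ⟨f, ψ_n⟩ φ_n defines a bounded operator on H with ‖M_{m,φ,ψ}‖ ≤ ‖m‖_∞ √(B_φ B_ψ), and its adjoint is M_{m,φ,ψ}* = M_{m*,ψ,φ}, where m* = {conj(m_n)}. -/
open scoped InnerProductSpace ComplexConjugate

private lemma synth_bound {H : Type*} [NormedAddCommGroup H] [InnerProductSpace ℂ H]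
    (φ : ℕ → H) (Bφ : ℝ)
    (hφ : ∀ f : H, Summable (fun n => ‖⟪φ n, f⟫_ℂ‖ ^ 2) ∧
      ∑' n, ‖⟪φ n, f⟫_ℂ‖ ^ 2 ≤ Bφ * ‖f‖ ^ 2)
    (c : ℕ → ℂ) (F : Finset ℕ) :
    ‖∑ n ∈ F, c n • φ n‖ ≤ Real.sqrt (Bφ * ∑ n ∈ F, ‖c n‖ ^ 2) := by
  set g : H := ∑ n ∈ F, c n • φ n with hg
  by_cases hg0 : g = 0
  · rw [hg0, norm_zero]; exact Real.sqrt_nonneg _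
  have hgpos : (0:ℝ) < ‖g‖ := norm_pos_iff.2 hg0
  set S : ℝ := ∑ n ∈ F, ‖c n‖ ^ 2 with hS
  have hBg : ∑ n ∈ F, ‖⟪φ n, g⟫_ℂ‖ ^ 2 ≤ Bφ * ‖g‖ ^ 2 :=
    le_trans (Summable.sum_le_tsum F (fun _ _ => sq_nonneg _) (hφ g).1) (hφ g).2
  have h1 : ‖g‖ ^ 2 ≤ ∑ n ∈ F, ‖c n‖ * ‖⟪φ n, g⟫_ℂ‖ := by
    have e1 : (⟪g, g⟫_ℂ) = ∑ n ∈ F, c n * ⟪g, φ n⟫_ℂ := by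
      rw [hg]
      rw [inner_sum]
      exact Finset.sum_congr rfl fun n _ => inner_smul_right _ _ _
    have e2 : ‖g‖ ^ 2 = ‖(⟪g, g⟫_ℂ)‖ := by
      simp [inner_self_eq_norm_sq_to_K]
    rw [e2, e1]
    refine le_trans (norm_sum_le _ _) (le_of_eq ?_)
    refine Finset.sum_congr rfl fun n _ => ?_
    rw [norm_mul, ← inner_conj_symm g (φ n), RCLike.norm_conj]
  have h2 : (∑ n ∈ F, ‖c n‖ * ‖⟪φ n, g⟫_ℂ‖) ^ 2 ≤ S * (Bφ * ‖g‖ ^ 2) := by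
    refine le_trans (Finset.sum_mul_sq_le_sq_mul_sq F _ _) ?_
    exact mul_le_mul_of_nonneg_left hBg (Finset.sum_nonneg fun _ _ => sq_nonneg _)
  have h3 : (‖g‖ ^ 2) ^ 2 ≤ S * (Bφ * ‖g‖ ^ 2) := by
    refine le_trans ?_ h2
    exact pow_le_pow_left₀ (sq_nonneg _) h1 2
  have h4 : ‖g‖ ^ 2 ≤ Bφ * S := by
    have := h3
    have hgsq : (0:ℝ) < ‖g‖ ^ 2 := by positivity
    nlinarith
  calc ‖g‖ = Real.sqrt (‖g‖ ^ 2) := (Real.sqrt_sq hgpos.le).symm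
    _ ≤ Real.sqrt (Bφ * S) := Real.sqrt_le_sqrt h4

private lemma mult_exists {H : Type*} [NormedAddCommGroup H] [InnerProductSpace ℂ H]
    [CompleteSpace H]
    (φ ψ : ℕ → H) (Bφ Bψ : ℝ) (hBφ : 0 < Bφ) (hBψ : 0 < Bψ)
    (hφ : ∀ f : H, Summable (fun n => ‖⟪φ n, f⟫_ℂ‖ ^ 2) ∧
      ∑' n, ‖⟪φ n, f⟫_ℂ‖ ^ 2 ≤ Bφ * ‖f‖ ^ 2)
    (hψ : ∀ f : H, Summable (fun n => ‖⟪ψ n, f⟫_ℂ‖ ^ 2) ∧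
      ∑' n, ‖⟪ψ n, f⟫_ℂ‖ ^ 2 ≤ Bψ * ‖f‖ ^ 2)
    (m : ℕ → ℂ) (C : ℝ) (hm : ∀ n, ‖m n‖ ≤ C) :
    ∃ M : H →L[ℂ] H,
      (∀ f : H, HasSum (fun n => m n • ⟪ψ n, f⟫_ℂ • φ n) (M f)) ∧
      ‖M‖ ≤ C * Real.sqrt (Bφ * Bψ) := by
  have hC : 0 ≤ C := le_trans (norm_nonneg _) (hm 0)
  -- coefficients
  set c : H → ℕ → ℂ := fun f n => m n * ⟪ψ n, f⟫_ℂ with hc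
  have hcsq : ∀ f n, ‖c f n‖ ^ 2 ≤ C ^ 2 * ‖⟪ψ n, f⟫_ℂ‖ ^ 2 := by
    intro f n
    rw [hc]
    simp only [norm_mul, mul_pow]
    exact mul_le_mul_of_nonneg_right (pow_le_pow_left₀ (norm_nonneg _) (hm n) 2) (sq_nonneg _)
  have hcsum : ∀ f : H, Summable (fun n => ‖c f n‖ ^ 2) := by
    intro f
    exact Summable.of_nonneg_of_le (fun n => sq_nonneg _) (hcsq f) (((hψ f).1).mul_left (C ^ 2))
  have hctsum : ∀ f : H, ∑' n, ‖c f n‖ ^ 2 ≤ C ^ 2 * (Bψ * ‖f‖ ^ 2) := by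
    intro f
    calc ∑' n, ‖c f n‖ ^ 2 ≤ ∑' n, C ^ 2 * ‖⟪ψ n, f⟫_ℂ‖ ^ 2 :=
          Summable.tsum_le_tsum (hcsq f) (hcsum f) (((hψ f).1).mul_left (C ^ 2))
      _ = C ^ 2 * ∑' n, ‖⟪ψ n, f⟫_ℂ‖ ^ 2 := tsum_mul_left
      _ ≤ C ^ 2 * (Bψ * ‖f‖ ^ 2) := mul_le_mul_of_nonneg_left (hψ f).2 (sq_nonneg _)
  -- summability of the vector series
  have hsum : ∀ f : H, Summable (fun n => c f n • φ n) := by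
    intro f
    rw [summable_iff_vanishing]
    intro e he
    obtain ⟨ε, hε, hball⟩ := Metric.mem_nhds_iff.1 he
    have hδ : (0:ℝ) < ε ^ 2 / Bφ := by positivity
    obtain ⟨s, hs⟩ := (summable_iff_vanishing.1 (hcsum f)) (Set.Iio (ε ^ 2 / Bφ))
      (Iio_mem_nhds hδ)
    refine ⟨s, fun t ht => ?_⟩
    apply hball
    rw [Metric.mem_ball, dist_zero_right]
    have h1 : ‖∑ n ∈ t, c f n • φ n‖ ≤ Real.sqrt (Bφ * ∑ n ∈ t, ‖c f n‖ ^ 2) :=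
      synth_bound φ Bφ hφ (c f) t
    have h2 : ∑ n ∈ t, ‖c f n‖ ^ 2 < ε ^ 2 / Bφ := hs t ht
    calc ‖∑ n ∈ t, c f n • φ n‖ ≤ Real.sqrt (Bφ * ∑ n ∈ t, ‖c f n‖ ^ 2) := h1
      _ < Real.sqrt (Bφ * (ε ^ 2 / Bφ)) := by
          exact Real.sqrt_lt_sqrt (by positivity) (mul_lt_mul_of_pos_left h2 hBφ)
      _ = ε := by
          rw [mul_div_cancel₀ _ (ne_of_gt hBφ), Real.sqrt_sq hε.le]
  have hHS : ∀ f : H, HasSum (fun n => c f n • φ n) (∑' n, c f n • φ n) :=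
    fun f => (hsum f).hasSum
  -- the linear map
  set K : ℝ := C * Real.sqrt (Bφ * Bψ) with hK
  have hKnn : 0 ≤ K := by positivity
  have hbound : ∀ f : H, ‖∑' n, c f n • φ n‖ ≤ K * ‖f‖ := by
    intro f
    have htail : ∀ F : Finset ℕ, ‖∑ n ∈ F, c f n • φ n‖ ≤ K * ‖f‖ := by
      intro F
      refine le_trans (synth_bound φ Bφ hφ (c f) F) ?_
      have h1 : Bφ * ∑ n ∈ F, ‖c f n‖ ^ 2 ≤ (K * ‖f‖) ^ 2 := by
        have hs1 : ∑ n ∈ F, ‖c f n‖ ^ 2 ≤ C ^ 2 * (Bψ * ‖f‖ ^ 2) :=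
          le_trans (Summable.sum_le_tsum F (fun _ _ => sq_nonneg _) (hcsum f)) (hctsum f)
        have he : (K * ‖f‖) ^ 2 = C ^ 2 * (Bφ * Bψ) * ‖f‖ ^ 2 := by
          rw [hK, mul_pow, mul_pow, Real.sq_sqrt (by positivity)]
        rw [he]
        nlinarith [sq_nonneg ‖f‖, hBφ.le]
      calc Real.sqrt (Bφ * ∑ n ∈ F, ‖c f n‖ ^ 2) ≤ Real.sqrt ((K * ‖f‖) ^ 2) :=
            Real.sqrt_le_sqrt h1
        _ = K * ‖f‖ := Real.sqrt_sq (by positivity)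
    have htend : Filter.Tendsto (fun F : Finset ℕ => ‖∑ n ∈ F, c f n • φ n‖)
        Filter.atTop (nhds ‖∑' n, c f n • φ n‖) := (hHS f).norm
    exact le_of_tendsto' htend htail
  let M₀ : H →ₗ[ℂ] H :=
    { toFun := fun f => ∑' n, c f n • φ n
      map_add' := by
        intro f g
        have h1 : HasSum (fun n => c (f + g) n • φ n)
            ((∑' n, c f n • φ n) + (∑' n, c g n • φ n)) := by
          have := (hHS f).add (hHS g)
          convert this using 2 with n
          rw [hc]
          simp only [inner_add_right, mul_add, add_smul]
        exact h1.tsum_eq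
      map_smul' := by
        intro a f
        have h1 : HasSum (fun n => c (a • f) n • φ n) (a • ∑' n, c f n • φ n) := by
          have := (hHS f).const_smul a
          convert this using 2 with n
          rw [hc]
          simp only [inner_smul_right, smul_smul]
          ring_nf
        exact h1.tsum_eq }
  refine ⟨LinearMap.mkContinuous M₀ K hbound, ?_, ?_⟩
  · intro f
    have h1 : HasSum (fun n => c f n • φ n) (LinearMap.mkContinuous M₀ K hbound f) := hHS f
    convert h1 using 2 with n
    rw [hc, smul_smul]
  · exact LinearMap.mkContinuous_norm_le _ hKnn _

/-- A Bessel multiplier is a bounded operator with norm at most `‖m‖_∞ √(Bφ Bψ)`, and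
its adjoint is the multiplier `M_{m*, ψ, φ}`. -/
theorem stmt1 {H : Type*} [NormedAddCommGroup H] [InnerProductSpace ℂ H] [CompleteSpace H]
    (φ ψ : ℕ → H) (Bφ Bψ : ℝ) (hBφ : 0 < Bφ) (hBψ : 0 < Bψ)
    (hφ : ∀ f : H, Summable (fun n => ‖⟪φ n, f⟫_ℂ‖ ^ 2) ∧
      ∑' n, ‖⟪φ n, f⟫_ℂ‖ ^ 2 ≤ Bφ * ‖f‖ ^ 2)
    (hψ : ∀ f : H, Summable (fun n => ‖⟪ψ n, f⟫_ℂ‖ ^ 2) ∧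
      ∑' n, ‖⟪ψ n, f⟫_ℂ‖ ^ 2 ≤ Bψ * ‖f‖ ^ 2)
    (m : ℕ → ℂ) (C : ℝ) (hm : ∀ n, ‖m n‖ ≤ C) :
    ∃ M : H →L[ℂ] H,
      (∀ f : H, HasSum (fun n => m n • ⟪ψ n, f⟫_ℂ • φ n) (M f)) ∧
      ‖M‖ ≤ C * Real.sqrt (Bφ * Bψ) ∧
      (∀ f : H, HasSum (fun n => (conj (m n)) • ⟪φ n, f⟫_ℂ • ψ n)
        ((ContinuousLinearMap.adjoint M) f)) := by
  obtain ⟨M, hM, hMn⟩ := mult_exists φ ψ Bφ Bψ hBφ hBψ hφ hψ m C hm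
  obtain ⟨N, hN, -⟩ := mult_exists ψ φ Bψ Bφ hBψ hBφ hψ hφ (fun n => conj (m n)) C
    (fun n => by rw [RCLike.norm_conj]; exact hm n)
  have hadj : N = ContinuousLinearMap.adjoint M := by
    rw [ContinuousLinearMap.eq_adjoint_iff]
    intro x y
    have h1 : HasSum (fun n => ⟪y, (conj (m n)) • ⟪φ n, x⟫_ℂ • ψ n⟫_ℂ) ⟪y, N x⟫_ℂ :=
      (innerSL ℂ y).hasSum (hN x)
    have h2 : HasSum (fun n => conj (⟪y, (conj (m n)) • ⟪φ n, x⟫_ℂ • ψ n⟫_ℂ))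
        (conj ⟪y, N x⟫_ℂ) := by
      rw [Complex.hasSum_conj, Complex.conj_conj]
      exact h1
    have h3 : HasSum (fun n => ⟪x, m n • ⟪ψ n, y⟫_ℂ • φ n⟫_ℂ) ⟪x, M y⟫_ℂ :=
      (innerSL ℂ x).hasSum (hM y)
    have heq : (fun n => conj (⟪y, (conj (m n)) • ⟪φ n, x⟫_ℂ • ψ n⟫_ℂ))
        = fun n => ⟪x, m n • ⟪ψ n, y⟫_ℂ • φ n⟫_ℂ := by
      funext n
      simp only [inner_smul_right, map_mul, Complex.conj_conj, inner_conj_symm]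
      ring
    rw [heq] at h2
    have := h2.unique h3
    rw [← this, inner_conj_symm]
  exact ⟨M, hM, hMn, fun f => by rw [← hadj]; exact hN f⟩
end

section
/- Let φ, ψ be Bessel sequences in H and m ∈ ℓ^∞ with lim_{n→∞} m_n = 0. Then the multiplier M_{m,φ,ψ} is a compact operator on H. -/
open scoped InnerProductSpace
open Filter

lemma rankOne_compact {H : Type*} [NormedAddCommGroup H] [InnerProductSpace ℂ H]
    (ℓ : H →L[ℂ] ℂ) (v : H) : IsCompactOperator (fun f => ℓ f • v) := by
  refine ⟨(fun c : ℂ => c • v) '' Metric.closedBall 0 ‖ℓ‖, ?_, ?_⟩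
  · exact (isCompact_closedBall (0:ℂ) ‖ℓ‖).image (continuous_id.smul continuous_const)
  · refine Filter.mem_of_superset (Metric.ball_mem_nhds (0:H) one_pos) ?_
    intro f hf
    refine ⟨ℓ f, ?_, rfl⟩
    rw [Metric.mem_closedBall, dist_zero_right]
    have h1 : ‖f‖ ≤ 1 := le_of_lt (by simpa using mem_ball_zero_iff.mp hf)
    calc ‖ℓ f‖ ≤ ‖ℓ‖ * ‖f‖ := ℓ.le_opNorm f
    _ ≤ ‖ℓ‖ * 1 := by nlinarith [ℓ.opNorm_nonneg]
    _ = ‖ℓ‖ := mul_one _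

/-- A Bessel multiplier whose symbol tends to `0` is a compact operator. -/
theorem stmt2 {H : Type*} [NormedAddCommGroup H] [InnerProductSpace ℂ H] [CompleteSpace H]
    (φ ψ : ℕ → H)
    (hφ : ∃ Bφ : ℝ, 0 < Bφ ∧ ∀ f : H, Summable (fun n => ‖⟪φ n, f⟫_ℂ‖ ^ 2) ∧
      ∑' n, ‖⟪φ n, f⟫_ℂ‖ ^ 2 ≤ Bφ * ‖f‖ ^ 2)
    (hψ : ∃ Bψ : ℝ, 0 < Bψ ∧ ∀ f : H, Summable (fun n => ‖⟪ψ n, f⟫_ℂ‖ ^ 2) ∧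
      ∑' n, ‖⟪ψ n, f⟫_ℂ‖ ^ 2 ≤ Bψ * ‖f‖ ^ 2)
    (m : ℕ → ℂ) (hm : ∃ C : ℝ, ∀ n, ‖m n‖ ≤ C)
    (hm0 : Filter.Tendsto m Filter.atTop (nhds 0))
    (M : H →L[ℂ] H)
    (hM : ∀ f : H, HasSum (fun n => m n • ⟪ψ n, f⟫_ℂ • φ n) (M f)) :
    IsCompactOperator ⇑M := by
  obtain ⟨Bφ, hBφ, hφ'⟩ := hφ
  obtain ⟨Bψ, hBψ, hψ'⟩ := hψ
  set s : ℝ := Real.sqrt (Bφ * Bψ) with hs_def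
  have hs_pos : 0 < s := Real.sqrt_pos.mpr (by positivity)
  have hs2 : s ^ 2 = Bφ * Bψ := Real.sq_sqrt (by positivity)
  -- the truncated operators
  set T : ℕ → H →L[ℂ] H :=
    fun N => ∑ n ∈ Finset.range N, (m n • innerSL ℂ (ψ n)).smulRight (φ n) with hT_def
  have hTapp : ∀ N f, T N f = ∑ n ∈ Finset.range N, m n • ⟪ψ n, f⟫_ℂ • φ n := by
    intro N f
    simp [hT_def, ContinuousLinearMap.sum_apply, smul_smul]
  -- each truncation is compact
  have hTc : ∀ N, IsCompactOperator (T N) := by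
    intro N
    have : T N ∈ compactOperator (RingHom.id ℂ) H H := by
      refine Submodule.sum_mem _ fun n _ => ?_
      exact rankOne_compact (m n • innerSL ℂ (ψ n)) (φ n)
    exact this
  -- the key tail estimate
  have key : ∀ (N : ℕ) (ε : ℝ), 0 ≤ ε → (∀ n, N ≤ n → ‖m n‖ ≤ ε) → ∀ f : H,
      ‖M f - T N f‖ ≤ ε * s * ‖f‖ := by
    intro N ε hε hεm f
    set v : H := M f - T N f with hv_def
    set d : ℕ → H := fun n => if n < N then 0 else m n • ⟪ψ n, f⟫_ℂ • φ n with hd_def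
    have hfin : HasSum (fun n => if n < N then m n • ⟪ψ n, f⟫_ℂ • φ n else 0) (T N f) := by
      have h := hasSum_sum_of_ne_finset_zero (s := Finset.range N) (L := SummationFilter.unconditional ℕ)
        (f := fun n => if n < N then m n • ⟪ψ n, f⟫_ℂ • φ n else 0)
        (by intro n hn; simp only [Finset.mem_range] at hn; simp [hn])
      rw [hTapp]
      convert h using 2 with n
      rename_i hn
      simp [Finset.mem_range.mp hn]
    have h1 : HasSum d v := by
      have h2 := (hM f).sub hfin
      refine h2.congr_fun fun n => ?_
      by_cases h : n < N <;> simp [hd_def, h]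
    by_cases hv0 : v = 0
    · rw [hv0, norm_zero]; positivity
    by_cases hf0 : f = 0
    · exfalso
      apply hv0
      have hd0 : d = fun _ => (0 : H) := by
        funext n
        by_cases h : n < N <;> simp [hd_def, h, hf0]
      exact h1.unique (hd0 ▸ hasSum_zero)
    have hvpos : 0 < ‖v‖ := norm_pos_iff.mpr hv0
    have hfpos : 0 < ‖f‖ := norm_pos_iff.mpr hf0
    set a : ℕ → ℝ := fun n => ‖⟪ψ n, f⟫_ℂ‖ with ha_def
    set b : ℕ → ℝ := fun n => ‖⟪φ n, v⟫_ℂ‖ with hb_def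
    set t : ℝ := s * ‖v‖ / (Bψ * ‖f‖) with ht_def
    have ht : 0 < t := by positivity
    -- pointwise bound
    have hbound : ∀ n, ‖⟪v, d n⟫_ℂ‖ ≤ ε * t / 2 * a n ^ 2 + ε / (2 * t) * b n ^ 2 := by
      intro n
      have step1 : ‖⟪v, d n⟫_ℂ‖ ≤ ε * (a n * b n) := by
        by_cases h : n < N
        · simp only [hd_def, if_pos h, inner_zero_right, norm_zero]
          positivity
        · simp only [hd_def, if_neg h, inner_smul_right]
          rw [norm_mul, norm_mul]
          have h1 : ‖⟪v, φ n⟫_ℂ‖ = b n := norm_inner_symm v (φ n)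
          rw [h1]
          have h2 := hεm n (Nat.le_of_not_lt h)
          have := norm_nonneg (⟪ψ n, f⟫_ℂ)
          have := norm_nonneg (⟪φ n, v⟫_ℂ)
          calc ‖m n‖ * (a n * b n) ≤ ε * (a n * b n) := by
                apply mul_le_mul_of_nonneg_right h2; positivity
          _ = ε * (a n * b n) := rfl
      refine step1.trans ?_
      have hsq := sq_nonneg (t * a n - b n)
      have han : 0 ≤ a n := norm_nonneg _
      have hbn : 0 ≤ b n := norm_nonneg _
      have hab : a n * b n ≤ (t ^ 2 * a n ^ 2 + b n ^ 2) / (2 * t) := by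
        rw [le_div_iff₀ (by positivity)]
        nlinarith
      have heq : ε * ((t ^ 2 * a n ^ 2 + b n ^ 2) / (2 * t))
          = ε * t / 2 * a n ^ 2 + ε / (2 * t) * b n ^ 2 := by
        field_simp
      calc ε * (a n * b n) ≤ ε * ((t ^ 2 * a n ^ 2 + b n ^ 2) / (2 * t)) := by
            apply mul_le_mul_of_nonneg_left hab hε
      _ = _ := heq
    have hsa : Summable (fun n => a n ^ 2) := (hψ' f).1
    have hsb : Summable (fun n => b n ^ 2) := (hφ' v).1
    have hS : Summable (fun n => ε * t / 2 * a n ^ 2 + ε / (2 * t) * b n ^ 2) :=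
      (hsa.mul_left _).add (hsb.mul_left _)
    have hsn : Summable (fun n => ‖⟪v, d n⟫_ℂ‖) :=
      Summable.of_nonneg_of_le (fun n => norm_nonneg _) hbound hS
    have h2 : HasSum (fun n => ⟪v, d n⟫_ℂ) ⟪v, v⟫_ℂ := (innerSL ℂ v).hasSum h1
    have hnormsq : ‖v‖ ^ 2 ≤ ε * s * ‖f‖ * ‖v‖ := by
      calc ‖v‖ ^ 2 = ‖⟪v, v⟫_ℂ‖ := by
            rw [inner_self_eq_norm_sq_to_K]
            simp
      _ = ‖∑' n, ⟪v, d n⟫_ℂ‖ := by rw [h2.tsum_eq]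
      _ ≤ ∑' n, ‖⟪v, d n⟫_ℂ‖ := norm_tsum_le_tsum_norm hsn
      _ ≤ ∑' n, (ε * t / 2 * a n ^ 2 + ε / (2 * t) * b n ^ 2) := hsn.tsum_le_tsum hbound hS
      _ = ε * t / 2 * ∑' n, a n ^ 2 + ε / (2 * t) * ∑' n, b n ^ 2 := by
            rw [Summable.tsum_add (hsa.mul_left _) (hsb.mul_left _), tsum_mul_left, tsum_mul_left]
      _ ≤ ε * t / 2 * (Bψ * ‖f‖ ^ 2) + ε / (2 * t) * (Bφ * ‖v‖ ^ 2) := by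
            apply add_le_add
            · exact mul_le_mul_of_nonneg_left (hψ' f).2 (by positivity)
            · exact mul_le_mul_of_nonneg_left (hφ' v).2 (by positivity)
      _ = ε * s * ‖f‖ * ‖v‖ := by
            rw [ht_def]
            field_simp
            linear_combination (-ε) * hs2
    nlinarith [hnormsq, hvpos]
  -- assemble: T N → M in operator norm
  refine isCompactOperator_of_tendsto (l := atTop) (F := T) (f := M) ?_
    (Filter.Eventually.of_forall hTc)
  rw [Metric.tendsto_atTop]
  intro ε hε
  have hε' : 0 < ε / (2 * (s + 1)) := by positivity
  obtain ⟨N, hN⟩ := Metric.tendsto_atTop.mp hm0 _ hε'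
  refine ⟨N, fun n hn => ?_⟩
  rw [dist_eq_norm]
  have hb : ‖T n - M‖ ≤ ε / (2 * (s + 1)) * s := by
    apply ContinuousLinearMap.opNorm_le_bound _ (by positivity)
    intro f
    rw [ContinuousLinearMap.sub_apply, norm_sub_rev]
    have := key n (ε / (2 * (s + 1))) (le_of_lt hε')
      (fun k hk => by
        have := hN k (le_trans hn hk)
        rw [dist_zero_right] at this
        exact le_of_lt this) f
    linarith [this]
  calc ‖T n - M‖ ≤ ε / (2 * (s + 1)) * s := hb
  _ < ε := by
      rw [div_mul_eq_mul_div, div_lt_iff₀ (by positivity)]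
      nlinarith
end

section
/- Let φ, ψ be Bessel sequences in H and m ∈ ℓ^∞. The multiplier M_{m,φ,ψ} is injective if and only if ψ is complete in H and N(D_{mφ}) ∩ R(C_ψ) = {0}, where mφ = {m_n φ_n}. -/
open scoped InnerProductSpace

lemma stmt3_aux {H : Type*} [NormedAddCommGroup H] [InnerProductSpace ℂ H]
    (ψ : ℕ → H) (f : H) (h : ∀ n, ⟪ψ n, f⟫_ℂ = 0) :
    f ∈ (Submodule.span ℂ (Set.range ψ))ᗮ := by
  rw [Submodule.mem_orthogonal]
  intro u hu
  induction hu using Submodule.span_induction with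
  | mem u hu => obtain ⟨n, rfl⟩ := hu; exact h n
  | zero => simp
  | add u v _ _ hu hv => rw [inner_add_left, hu, hv, add_zero]
  | smul c u _ hu => rw [inner_smul_left, hu, mul_zero]

/-- `M_{m,φ,ψ}` is injective iff `ψ` is complete and `N(D_{mφ}) ∩ R(C_ψ) = {0}`. -/
theorem stmt3 {H : Type*} [NormedAddCommGroup H] [InnerProductSpace ℂ H] [CompleteSpace H]
    (φ ψ : ℕ → H)
    (hφ : ∃ Bφ : ℝ, 0 < Bφ ∧ ∀ f : H, Summable (fun n => ‖⟪φ n, f⟫_ℂ‖ ^ 2) ∧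
      ∑' n, ‖⟪φ n, f⟫_ℂ‖ ^ 2 ≤ Bφ * ‖f‖ ^ 2)
    (hψ : ∃ Bψ : ℝ, 0 < Bψ ∧ ∀ f : H, Summable (fun n => ‖⟪ψ n, f⟫_ℂ‖ ^ 2) ∧
      ∑' n, ‖⟪ψ n, f⟫_ℂ‖ ^ 2 ≤ Bψ * ‖f‖ ^ 2)
    (m : ℕ → ℂ) (hm : ∃ C : ℝ, ∀ n, ‖m n‖ ≤ C)
    (M : H →L[ℂ] H)
    (hM : ∀ f : H, HasSum (fun n => m n • ⟪ψ n, f⟫_ℂ • φ n) (M f)) :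
    Function.Injective ⇑M ↔
      ((Submodule.span ℂ (Set.range ψ)).topologicalClosure = ⊤ ∧
       ∀ f : H, HasSum (fun n => ⟪ψ n, f⟫_ℂ • m n • φ n) 0 → ∀ n, ⟪ψ n, f⟫_ℂ = 0) := by
  have hcomm : ∀ (f : H) (n : ℕ), m n • ⟪ψ n, f⟫_ℂ • φ n = ⟪ψ n, f⟫_ℂ • m n • φ n :=
    fun f n => smul_comm _ _ _
  constructor
  · intro hinj
    constructor
    · rw [Submodule.topologicalClosure_eq_top_iff, Submodule.eq_bot_iff]
      intro f hf
      have h0 : ∀ n, ⟪ψ n, f⟫_ℂ = 0 := fun n =>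
        hf (ψ n) (Submodule.subset_span (Set.mem_range_self n))
      have hMf : M f = 0 := by
        have h := hM f
        simp only [h0, zero_smul, smul_zero] at h
        exact h.unique hasSum_zero
      exact hinj (by simpa using hMf)
    · intro f hsum n
      have hMf : M f = 0 := by
        have h := hM f
        simp_rw [hcomm f] at h
        exact h.unique hsum
      have hf0 : f = 0 := hinj (by simpa using hMf)
      simp [hf0]
  · rintro ⟨hcompl, hker⟩
    intro f g hfg
    have h0 : M (f - g) = 0 := by rw [map_sub, hfg, sub_self]
    have h := hM (f - g)
    rw [h0] at h
    simp_rw [hcomm (f - g)] at h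
    have hc := hker (f - g) h
    have hmem : f - g ∈ (Submodule.span ℂ (Set.range ψ))ᗮ := stmt3_aux ψ _ hc
    rw [Submodule.topologicalClosure_eq_top_iff] at hcompl
    rw [hcompl, Submodule.mem_bot, sub_eq_zero] at hmem
    exact hmem
end

section
/- Let φ, ψ be Bessel sequences in H and m ∈ ℓ^∞. The multiplier M_{m,φ,ψ} is injective if and only if mψ = {m_n ψ_n} is complete in H and N(D_φ) ∩ R(C_{m*ψ}) = {0}. -/
open scoped InnerProductSpace

/-- `M_{m,φ,ψ}` is injective iff `mψ` is complete and `N(D_φ) ∩ R(C_{m*ψ}) = {0}`. -/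
theorem stmt4 {H : Type*} [NormedAddCommGroup H] [InnerProductSpace ℂ H] [CompleteSpace H]
    (φ ψ : ℕ → H)
    (hφ : ∃ Bφ : ℝ, 0 < Bφ ∧ ∀ f : H, Summable (fun n => ‖⟪φ n, f⟫_ℂ‖ ^ 2) ∧
      ∑' n, ‖⟪φ n, f⟫_ℂ‖ ^ 2 ≤ Bφ * ‖f‖ ^ 2)
    (hψ : ∃ Bψ : ℝ, 0 < Bψ ∧ ∀ f : H, Summable (fun n => ‖⟪ψ n, f⟫_ℂ‖ ^ 2) ∧
      ∑' n, ‖⟪ψ n, f⟫_ℂ‖ ^ 2 ≤ Bψ * ‖f‖ ^ 2)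
    (m : ℕ → ℂ) (hm : ∃ C : ℝ, ∀ n, ‖m n‖ ≤ C)
    (M : H →L[ℂ] H)
    (hM : ∀ f : H, HasSum (fun n => m n • ⟪ψ n, f⟫_ℂ • φ n) (M f)) :
    Function.Injective ⇑M ↔
      ((Submodule.span ℂ (Set.range (fun n => m n • ψ n))).topologicalClosure = ⊤ ∧
       ∀ f : H, HasSum (fun n => (m n * ⟪ψ n, f⟫_ℂ) • φ n) 0 →
         ∀ n, m n * ⟪ψ n, f⟫_ℂ = 0) := by
  have key : ∀ f : H, HasSum (fun n => (m n * ⟪ψ n, f⟫_ℂ) • φ n) (M f) := by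
    intro f
    have := hM f
    simpa only [smul_smul] using this
  constructor
  · intro hinj
    constructor
    · rw [Submodule.topologicalClosure_eq_top_iff, Submodule.eq_bot_iff]
      intro g hg
      have h0 : ∀ n, m n * ⟪ψ n, g⟫_ℂ = 0 := by
        intro n
        have h := hg (m n • ψ n) (Submodule.subset_span ⟨n, rfl⟩)
        rw [inner_smul_left] at h
        rcases mul_eq_zero.1 h with h' | h'
        · simp [show m n = 0 from by simpa using h']
        · simp [h']
      have hMg : M g = 0 := by
        have hs := key g
        have h2 : (fun n => (m n * ⟪ψ n, g⟫_ℂ) • φ n) = fun _ => (0 : H) := by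
          funext n; rw [h0 n, zero_smul]
        rw [h2] at hs
        exact (hasSum_zero.unique hs).symm
      exact hinj (hMg.trans (map_zero M).symm)
    · intro f hf n
      have hMf : M f = 0 := (key f).unique hf
      have hf0 : f = 0 := hinj (hMf.trans (map_zero M).symm)
      simp [hf0]
  · rintro ⟨hcomp, hnull⟩
    intro a b hab
    have hker : M (a - b) = 0 := by rw [map_sub, hab, sub_self]
    set f := a - b with hfdef
    have hs : HasSum (fun n => (m n * ⟪ψ n, f⟫_ℂ) • φ n) 0 := by
      have := key f; rwa [hker] at this
    have h0 := hnull f hs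
    have hmem : f ∈ (Submodule.span ℂ (Set.range fun n => m n • ψ n))ᗮ := by
      rw [Submodule.mem_orthogonal]
      intro u hu
      induction hu using Submodule.span_induction with
      | mem x hx =>
        obtain ⟨n, rfl⟩ := hx
        rw [inner_smul_left]
        rcases mul_eq_zero.1 (h0 n) with h' | h'
        · simp [h']
        · simp [h']
      | zero => simp
      | add x y _ _ hx hy => rw [inner_add_left, hx, hy, add_zero]
      | smul c x _ hx => rw [inner_smul_left, hx, mul_zero]
    rw [Submodule.topologicalClosure_eq_top_iff] at hcomp
    have : f = 0 := by rw [hcomp] at hmem; simpa using hmem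
    exact sub_eq_zero.1 this
end

section
/- Let φ, ψ be Bessel sequences in H and m ∈ ℓ^∞. The multiplier M_{m,φ,ψ} is surjective if and only if φ is a frame for H and N(D_φ) + R(C_{m*ψ}) = ℓ². -/
open scoped InnerProductSpace

namespace Stmt5Aux

variable {H : Type*} [NormedAddCommGroup H] [InnerProductSpace ℂ H] [CompleteSpace H]

lemma memℓp_two_iff (c : ℕ → ℂ) : Memℓp c 2 ↔ Summable (fun n => ‖c n‖ ^ 2) := by
  rw [memℓp_gen_iff (by norm_num)]
  norm_num

/-- Cauchy–Schwarz for tsum of nonneg reals. -/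
lemma tsum_cs {a b : ℕ → ℝ} (ha : ∀ n, 0 ≤ a n) (hb : ∀ n, 0 ≤ b n)
    (hsa : Summable (fun n => a n ^ 2)) (hsb : Summable (fun n => b n ^ 2)) :
    Summable (fun n => a n * b n) ∧
      ∑' n, a n * b n ≤ Real.sqrt (∑' n, a n ^ 2) * Real.sqrt (∑' n, b n ^ 2) := by
  have hsum : Summable (fun n => a n * b n) := by
    refine Summable.of_nonneg_of_le (fun n => mul_nonneg (ha n) (hb n))
      (fun n => ?_) ((hsa.add hsb).div_const 2)
    nlinarith [sq_nonneg (a n - b n)]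
  refine ⟨hsum, Summable.tsum_le_of_sum_le hsum fun t => ?_⟩
  have h1 : (∑ n ∈ t, a n * b n) ^ 2 ≤ (∑ n ∈ t, a n ^ 2) * ∑ n ∈ t, b n ^ 2 :=
    Finset.sum_mul_sq_le_sq_mul_sq t a b
  have h2 : (∑ n ∈ t, a n ^ 2) ≤ ∑' n, a n ^ 2 :=
    Summable.sum_le_tsum t (fun n _ => sq_nonneg _) hsa
  have h3 : (∑ n ∈ t, b n ^ 2) ≤ ∑' n, b n ^ 2 :=
    Summable.sum_le_tsum t (fun n _ => sq_nonneg _) hsb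
  have h4 : 0 ≤ ∑ n ∈ t, a n * b n :=
    Finset.sum_nonneg fun n _ => mul_nonneg (ha n) (hb n)
  have h5 : 0 ≤ ∑ n ∈ t, a n ^ 2 := Finset.sum_nonneg fun n _ => sq_nonneg _
  have h6 : 0 ≤ ∑ n ∈ t, b n ^ 2 := Finset.sum_nonneg fun n _ => sq_nonneg _
  calc ∑ n ∈ t, a n * b n
      ≤ Real.sqrt ((∑' n, a n ^ 2) * ∑' n, b n ^ 2) := by
        rw [show ∑ n ∈ t, a n * b n = Real.sqrt ((∑ n ∈ t, a n * b n) ^ 2) from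
          (Real.sqrt_sq h4).symm]
        exact Real.sqrt_le_sqrt (by nlinarith)
    _ = _ := Real.sqrt_mul (le_trans h5 h2) _

/-- Finite-sum synthesis bound from a Bessel bound. -/
lemma finset_bound {φ : ℕ → H} {B : ℝ} (hB : 0 ≤ B)
    (hφ : ∀ f : H, Summable (fun n => ‖⟪φ n, f⟫_ℂ‖ ^ 2) ∧
      ∑' n, ‖⟪φ n, f⟫_ℂ‖ ^ 2 ≤ B * ‖f‖ ^ 2)
    (c : ℕ → ℂ) (t : Finset ℕ) :
    ‖∑ n ∈ t, c n • φ n‖ ^ 2 ≤ B * ∑ n ∈ t, ‖c n‖ ^ 2 := by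
  classical
  set v := ∑ n ∈ t, c n • φ n with hv
  have hinner : (⟪v, v⟫_ℂ) = ∑ n ∈ t, c n * ⟪v, φ n⟫_ℂ := by
    rw [hv]
    rw [inner_sum]
    exact Finset.sum_congr rfl fun n _ => inner_smul_right _ _ _
  have h0 : (‖v‖ : ℝ) ^ 2 ≤ ∑ n ∈ t, ‖c n‖ * ‖⟪φ n, v⟫_ℂ‖ := by
    have : (‖v‖ : ℝ) ^ 2 = RCLike.re ⟪v, v⟫_ℂ := (inner_self_eq_norm_sq (𝕜 := ℂ) v).symm
    rw [this, hinner]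
    calc RCLike.re (∑ n ∈ t, c n * ⟪v, φ n⟫_ℂ)
        ≤ ‖∑ n ∈ t, c n * ⟪v, φ n⟫_ℂ‖ := RCLike.re_le_norm _
      _ ≤ ∑ n ∈ t, ‖c n * ⟪v, φ n⟫_ℂ‖ := norm_sum_le _ _
      _ = ∑ n ∈ t, ‖c n‖ * ‖⟪φ n, v⟫_ℂ‖ := by
          refine Finset.sum_congr rfl fun n _ => ?_
          rw [norm_mul, norm_inner_symm]
  have hcs : (∑ n ∈ t, ‖c n‖ * ‖⟪φ n, v⟫_ℂ‖) ^ 2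
      ≤ (∑ n ∈ t, ‖c n‖ ^ 2) * ∑ n ∈ t, ‖⟪φ n, v⟫_ℂ‖ ^ 2 :=
    Finset.sum_mul_sq_le_sq_mul_sq t _ _
  have hbes : (∑ n ∈ t, ‖⟪φ n, v⟫_ℂ‖ ^ 2) ≤ B * ‖v‖ ^ 2 :=
    le_trans (Summable.sum_le_tsum t (fun n _ => sq_nonneg _) (hφ v).1) (hφ v).2
  have hS : 0 ≤ ∑ n ∈ t, ‖c n‖ ^ 2 := Finset.sum_nonneg fun n _ => sq_nonneg _
  rcases eq_or_lt_of_le (norm_nonneg v) with h | h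
  · rw [← h]; simpa using mul_nonneg hB hS
  · have h5 : 0 ≤ ∑ n ∈ t, ‖c n‖ * ‖⟪φ n, v⟫_ℂ‖ :=
      Finset.sum_nonneg fun n _ => mul_nonneg (norm_nonneg _) (norm_nonneg _)
    nlinarith [sq_nonneg (‖v‖), mul_pos h h]

/-- Synthesis operator convergence. -/
lemma synth_summable {φ : ℕ → H} {B : ℝ} (hB : 0 ≤ B)
    (hφ : ∀ f : H, Summable (fun n => ‖⟪φ n, f⟫_ℂ‖ ^ 2) ∧
      ∑' n, ‖⟪φ n, f⟫_ℂ‖ ^ 2 ≤ B * ‖f‖ ^ 2)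
    {c : ℕ → ℂ} (hc : Summable fun n => ‖c n‖ ^ 2) :
    Summable (fun n => c n • φ n) := by
  rw [summable_iff_vanishing_norm]
  intro ε hε
  obtain ⟨s, hs⟩ := summable_iff_vanishing_norm.1 hc (ε ^ 2 / (B + 1)) (by positivity)
  refine ⟨s, fun t ht => ?_⟩
  have h1 := finset_bound hB hφ c t
  have h2 := hs t ht
  have h3 : (0:ℝ) ≤ ∑ n ∈ t, ‖c n‖ ^ 2 := Finset.sum_nonneg fun n _ => sq_nonneg _
  rw [Real.norm_of_nonneg h3] at h2
  have : ‖∑ n ∈ t, c n • φ n‖ ^ 2 < ε ^ 2 := by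
    calc ‖∑ n ∈ t, c n • φ n‖ ^ 2 ≤ B * ∑ n ∈ t, ‖c n‖ ^ 2 := h1
      _ ≤ (B + 1) * ∑ n ∈ t, ‖c n‖ ^ 2 := by nlinarith
      _ < (B + 1) * (ε ^ 2 / (B + 1)) := by
          rcases eq_or_lt_of_le h3 with h | h
          · rw [← h, mul_zero]; exact mul_pos (by linarith) (by positivity)
          · exact (mul_lt_mul_iff_right₀ (by linarith)).2 h2
      _ = ε ^ 2 := by field_simp
  nlinarith [norm_nonneg (∑ n ∈ t, c n • φ n)]

/-- Norm bound on the limit of the synthesis sum. -/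
lemma synth_norm_bound {φ : ℕ → H} {B : ℝ} (hB : 0 ≤ B)
    (hφ : ∀ f : H, Summable (fun n => ‖⟪φ n, f⟫_ℂ‖ ^ 2) ∧
      ∑' n, ‖⟪φ n, f⟫_ℂ‖ ^ 2 ≤ B * ‖f‖ ^ 2)
    {c : ℕ → ℂ} (hc : Summable fun n => ‖c n‖ ^ 2) {g : H}
    (hg : HasSum (fun n => c n • φ n) g) :
    ‖g‖ ^ 2 ≤ B * ∑' n, ‖c n‖ ^ 2 := by
  have htend : Filter.Tendsto (fun s : Finset ℕ => ‖∑ n ∈ s, c n • φ n‖ ^ 2)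
      Filter.atTop (nhds (‖g‖ ^ 2)) := by
    exact (continuous_norm.tendsto g).comp hg |>.pow 2 |>.congr (fun s => rfl)
  refine le_of_tendsto htend (Filter.Eventually.of_forall fun s => ?_)
  calc ‖∑ n ∈ s, c n • φ n‖ ^ 2 ≤ B * ∑ n ∈ s, ‖c n‖ ^ 2 := finset_bound hB hφ c s
    _ ≤ B * ∑' n, ‖c n‖ ^ 2 := by
        have := Summable.sum_le_tsum s (fun n (_ : n ∉ s) => sq_nonneg ‖c n‖) hc
        nlinarith


/-- Frame condition implies the synthesis operator hits every vector, with coefficients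
given by the frame operator's preimage. -/
lemma exists_coeff {φ : ℕ → H} {A B : ℝ} (hA : 0 < A) (hB : 0 < B)
    (hfr : ∀ f : H, Summable (fun n => ‖⟪φ n, f⟫_ℂ‖ ^ 2) ∧
      A * ‖f‖ ^ 2 ≤ ∑' n, ‖⟪φ n, f⟫_ℂ‖ ^ 2 ∧
      ∑' n, ‖⟪φ n, f⟫_ℂ‖ ^ 2 ≤ B * ‖f‖ ^ 2) (g : H) :
    ∃ f₀ : H, HasSum (fun n => ⟪φ n, f₀⟫_ℂ • φ n) g := by
  classical
  have hbes : ∀ f : H, Summable (fun n => ‖⟪φ n, f⟫_ℂ‖ ^ 2) ∧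
      ∑' n, ‖⟪φ n, f⟫_ℂ‖ ^ 2 ≤ B * ‖f‖ ^ 2 := fun f => ⟨(hfr f).1, (hfr f).2.2⟩
  -- the frame operator as a plain function
  have hsum : ∀ f : H, Summable (fun n => ⟪φ n, f⟫_ℂ • φ n) := fun f =>
    synth_summable hB.le hbes (hfr f).1
  set S₀ : H → H := fun f => ∑' n, ⟪φ n, f⟫_ℂ • φ n with hS₀
  have hS : ∀ f, HasSum (fun n => ⟪φ n, f⟫_ℂ • φ n) (S₀ f) := fun f => (hsum f).hasSum
  have hadd : ∀ f g : H, S₀ (f + g) = S₀ f + S₀ g := by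
    intro f g
    refine (hS (f + g)).unique ?_
    have he : (fun n => ⟪φ n, f + g⟫_ℂ • φ n)
        = fun n => ⟪φ n, f⟫_ℂ • φ n + ⟪φ n, g⟫_ℂ • φ n := by
      funext n; rw [inner_add_right, add_smul]
    rw [he]; exact (hS f).add (hS g)
  have hsmul : ∀ (a : ℂ) (f : H), S₀ (a • f) = a • S₀ f := by
    intro a f
    refine (hS (a • f)).unique ?_
    have he : (fun n => ⟪φ n, a • f⟫_ℂ • φ n) = fun n => a • (⟪φ n, f⟫_ℂ • φ n) := by
      funext n; rw [inner_smul_right, smul_smul]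
    rw [he]; exact (hS f).const_smul a
  have hnorm : ∀ f : H, ‖S₀ f‖ ≤ B * ‖f‖ := by
    intro f
    have h1 : ‖S₀ f‖ ^ 2 ≤ B * ∑' n, ‖⟪φ n, f⟫_ℂ‖ ^ 2 :=
      synth_norm_bound hB.le hbes (hfr f).1 (hS f)
    have h2 := (hfr f).2.2
    have h3 : ‖S₀ f‖ ^ 2 ≤ (B * ‖f‖) ^ 2 := by nlinarith
    nlinarith [norm_nonneg (S₀ f), mul_nonneg hB.le (norm_nonneg f)]
  set S : H →L[ℂ] H :=
    LinearMap.mkContinuous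
      { toFun := S₀, map_add' := hadd, map_smul' := hsmul } B
      (fun f => hnorm f) with hSdef
  have hSapp : ∀ f, S f = S₀ f := fun f => rfl
  -- coercivity: re ⟪f, S f⟫ = ∑' ‖⟪φ n, f⟫‖²
  have hcoer : ∀ f : H, RCLike.re ⟪f, S f⟫_ℂ = ∑' n, ‖⟪φ n, f⟫_ℂ‖ ^ 2 := by
    intro f
    have h1 : HasSum (fun b => ⟪φ b, f⟫_ℂ * ⟪f, φ b⟫_ℂ) ⟪f, S f⟫_ℂ := by
      have h := (innerSL ℂ f).hasSum (hS f)
      simp at h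
      exact h
    have h2 : (fun b => ⟪φ b, f⟫_ℂ * ⟪f, φ b⟫_ℂ)
        = fun b => ((‖⟪φ b, f⟫_ℂ‖ ^ 2 : ℝ) : ℂ) := by
      funext n
      rw [show ⟪f, φ n⟫_ℂ = starRingEnd ℂ ⟪φ n, f⟫_ℂ from (inner_conj_symm _ _).symm,
        RCLike.mul_conj]
      norm_cast
    rw [h2] at h1
    have h3 : HasSum (fun n => (‖⟪φ n, f⟫_ℂ‖ ^ 2 : ℝ)) (RCLike.re ⟪f, S f⟫_ℂ) := by
      simpa [← Complex.ofReal_pow] using Complex.reCLM.hasSum h1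
    exact (h3.unique (hfr f).1.hasSum) ▸ rfl
  -- S is bounded below
  have hlow : ∀ f : H, A * ‖f‖ ≤ ‖S f‖ := by
    intro f
    rcases eq_or_ne f 0 with rfl | hf
    · simp
    have h1 : A * ‖f‖ ^ 2 ≤ RCLike.re ⟪f, S f⟫_ℂ := by
      rw [hcoer f]; exact (hfr f).2.1
    have h2 : RCLike.re ⟪f, S f⟫_ℂ ≤ ‖f‖ * ‖S f‖ :=
      le_trans (RCLike.re_le_norm _) (norm_inner_le_norm _ _)
    have hf' : 0 < ‖f‖ := norm_pos_iff.2 hf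
    nlinarith
  -- closed range
  have hanti : AntilipschitzWith (⟨A, hA.le⟩ : NNReal)⁻¹ ⇑S := by
    apply ContinuousLinearMap.antilipschitz_of_bound
    intro x
    have := hlow x
    change ‖x‖ ≤ A⁻¹ * ‖S x‖
    have hAx : ‖x‖ ≤ A⁻¹ * ‖S x‖ := by
      rw [le_inv_mul_iff₀ hA]; linarith
    simpa using hAx
  have hclosed : IsClosed (Set.range ⇑S) := hanti.isClosed_range S.uniformContinuous
  set K : Submodule ℂ H := LinearMap.range (S : H →ₗ[ℂ] H) with hK
  have hKclosed : IsClosed (K : Set H) := by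
    have : (K : Set H) = Set.range ⇑S := by
      ext x; simp [hK, LinearMap.mem_range, Set.mem_range]
    rw [this]; exact hclosed
  haveI : CompleteSpace K := hKclosed.completeSpace_coe
  have hbot : Kᗮ = ⊥ := by
    rw [Submodule.eq_bot_iff]
    intro x hx
    have hx' : ⟪S x, x⟫_ℂ = 0 :=
      (Submodule.mem_orthogonal K x).1 hx (S x) (LinearMap.mem_range_self _ x)
    have h0 : RCLike.re ⟪x, S x⟫_ℂ = 0 := by
      rw [← inner_conj_symm]
      rw [hx']
      simp
    have h1 : A * ‖x‖ ^ 2 ≤ 0 := by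
      rw [← h0, hcoer x]; exact (hfr x).2.1
    have := norm_nonneg x
    by_contra hxne
    have hx0 : 0 < ‖x‖ := norm_pos_iff.2 hxne
    nlinarith [mul_pos hA (mul_pos hx0 hx0)]
  have htop : K = ⊤ := Submodule.orthogonal_eq_bot_iff.1 hbot
  have hg : g ∈ K := htop ▸ Submodule.mem_top
  obtain ⟨f₀, hf₀⟩ := hg
  exact ⟨f₀, hf₀ ▸ hS f₀⟩

end Stmt5Aux
set_option linter.unusedSectionVars false

open scoped InnerProductSpace

/-- `M_{m,φ,ψ}` is surjective iff `φ` is a frame and `N(D_φ) + R(C_{m*ψ}) = ℓ²`. -/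
theorem stmt5 {H : Type*} [NormedAddCommGroup H] [InnerProductSpace ℂ H] [CompleteSpace H]
    (φ ψ : ℕ → H)
    (hφ : ∃ Bφ : ℝ, 0 < Bφ ∧ ∀ f : H, Summable (fun n => ‖⟪φ n, f⟫_ℂ‖ ^ 2) ∧
      ∑' n, ‖⟪φ n, f⟫_ℂ‖ ^ 2 ≤ Bφ * ‖f‖ ^ 2)
    (hψ : ∃ Bψ : ℝ, 0 < Bψ ∧ ∀ f : H, Summable (fun n => ‖⟪ψ n, f⟫_ℂ‖ ^ 2) ∧
      ∑' n, ‖⟪ψ n, f⟫_ℂ‖ ^ 2 ≤ Bψ * ‖f‖ ^ 2)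
    (m : ℕ → ℂ) (hm : ∃ C : ℝ, ∀ n, ‖m n‖ ≤ C)
    (M : H →L[ℂ] H)
    (hM : ∀ f : H, HasSum (fun n => m n • ⟪ψ n, f⟫_ℂ • φ n) (M f)) :
    Function.Surjective ⇑M ↔
      ((∃ A B : ℝ, 0 < A ∧ 0 < B ∧ ∀ f : H,
          Summable (fun n => ‖⟪φ n, f⟫_ℂ‖ ^ 2) ∧
          A * ‖f‖ ^ 2 ≤ ∑' n, ‖⟪φ n, f⟫_ℂ‖ ^ 2 ∧
          ∑' n, ‖⟪φ n, f⟫_ℂ‖ ^ 2 ≤ B * ‖f‖ ^ 2) ∧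
       ∀ c : ℕ → ℂ, Memℓp c 2 →
         ∃ (d : ℕ → ℂ) (f : H), Memℓp d 2 ∧
           HasSum (fun n => d n • φ n) 0 ∧
           c = d + fun n => m n * ⟪ψ n, f⟫_ℂ) := by
  classical
  obtain ⟨Bφ, hBφ, hφ'⟩ := hφ
  obtain ⟨Bψ, hBψ, hψ'⟩ := hψ
  obtain ⟨C₀, hm'⟩ := hm
  set C : ℝ := C₀ + 1 with hC
  have hCpos : 0 < C := lt_of_le_of_lt (le_trans (norm_nonneg (m 0)) (hm' 0)) (by simp [hC])
  have hmC : ∀ n, ‖m n‖ ≤ C := fun n => le_trans (hm' n) (by simp [hC])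
  -- membership of the multiplied analysis coefficients in ℓ²
  have hmem : ∀ f : H, Summable fun n => ‖m n * ⟪ψ n, f⟫_ℂ‖ ^ 2 := by
    intro f
    refine Summable.of_nonneg_of_le (fun n => sq_nonneg _) (fun n => ?_)
      (((hψ' f).1).mul_left (C ^ 2))
    rw [norm_mul]
    calc (‖m n‖ * ‖⟪ψ n, f⟫_ℂ‖) ^ 2 = ‖m n‖ ^ 2 * ‖⟪ψ n, f⟫_ℂ‖ ^ 2 := by ring
      _ ≤ C ^ 2 * ‖⟪ψ n, f⟫_ℂ‖ ^ 2 :=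
          mul_le_mul_of_nonneg_right
            (pow_le_pow_left₀ (norm_nonneg _) (hmC n) 2) (sq_nonneg _)
  constructor
  · intro hsurj
    obtain ⟨K, hKpos, hKsur⟩ := M.exists_preimage_norm_le hsurj
    constructor
    · -- φ is a frame
      set c₀ : ℝ := C * Real.sqrt Bψ * K with hc₀
      have hsq : 0 < Real.sqrt Bψ := Real.sqrt_pos.2 hBψ
      have hc₀pos : 0 < c₀ := by positivity
      refine ⟨(c₀ ^ 2)⁻¹, Bφ, by positivity, hBφ, fun g => ?_⟩
      refine ⟨(hφ' g).1, ?_, (hφ' g).2⟩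
      set T : ℝ := ∑' n, ‖⟪φ n, g⟫_ℂ‖ ^ 2 with hT
      have hTnn : 0 ≤ T := tsum_nonneg fun n => sq_nonneg _
      rcases eq_or_ne g 0 with rfl | hg0
      · simpa using hTnn
      obtain ⟨f, hf, hfn⟩ := hKsur g
      -- inner product expansion
      have h1 : HasSum (fun n => m n * (⟪ψ n, f⟫_ℂ * ⟪g, φ n⟫_ℂ)) ⟪g, M f⟫_ℂ := by
        simpa [inner_smul_right, mul_assoc] using (innerSL ℂ g).hasSum (hM f)
      set a : ℕ → ℝ := fun n => ‖m n * ⟪ψ n, f⟫_ℂ‖ with ha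
      set b : ℕ → ℝ := fun n => ‖⟪φ n, g⟫_ℂ‖ with hb
      have hsa : Summable fun n => a n ^ 2 := hmem f
      have hsb : Summable fun n => b n ^ 2 := (hφ' g).1
      obtain ⟨hsab, hcs⟩ := Stmt5Aux.tsum_cs (fun n => norm_nonneg _)
        (fun n => norm_nonneg _) hsa hsb
      have hnormsum : (fun n => ‖m n * (⟪ψ n, f⟫_ℂ * ⟪g, φ n⟫_ℂ)‖) = fun n => a n * b n := by
        funext n
        rw [ha, hb]
        simp only [norm_mul]
        rw [norm_inner_symm g (φ n)]
        ring
      have h2 : ‖g‖ ^ 2 ≤ ∑' n, a n * b n := by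
        have hre : (‖g‖ : ℝ) ^ 2 = RCLike.re ⟪g, M f⟫_ℂ := by
          rw [hf]; exact (inner_self_eq_norm_sq (𝕜 := ℂ) g).symm
        rw [hre]
        calc RCLike.re ⟪g, M f⟫_ℂ ≤ ‖⟪g, M f⟫_ℂ‖ := RCLike.re_le_norm _
          _ = ‖∑' n, m n * (⟪ψ n, f⟫_ℂ * ⟪g, φ n⟫_ℂ)‖ := by rw [h1.tsum_eq]
          _ ≤ ∑' n, ‖m n * (⟪ψ n, f⟫_ℂ * ⟪g, φ n⟫_ℂ)‖ := by
              apply norm_tsum_le_tsum_norm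
              rw [hnormsum]; exact hsab
          _ = ∑' n, a n * b n := by rw [hnormsum]
      have hbound : ∀ n, a n ^ 2 ≤ C ^ 2 * ‖⟪ψ n, f⟫_ℂ‖ ^ 2 := by
        intro n
        rw [ha]; simp only [norm_mul]
        calc (‖m n‖ * ‖⟪ψ n, f⟫_ℂ‖) ^ 2 = ‖m n‖ ^ 2 * ‖⟪ψ n, f⟫_ℂ‖ ^ 2 := by ring
          _ ≤ C ^ 2 * ‖⟪ψ n, f⟫_ℂ‖ ^ 2 :=
              mul_le_mul_of_nonneg_right
                (pow_le_pow_left₀ (norm_nonneg _) (hmC n) 2) (sq_nonneg _)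
      have h3 : ∑' n, a n ^ 2 ≤ C ^ 2 * (Bψ * ‖f‖ ^ 2) := by
        calc ∑' n, a n ^ 2 ≤ ∑' n, C ^ 2 * ‖⟪ψ n, f⟫_ℂ‖ ^ 2 :=
              Summable.tsum_le_tsum hbound hsa (((hψ' f).1).mul_left (C ^ 2))
          _ = C ^ 2 * ∑' n, ‖⟪ψ n, f⟫_ℂ‖ ^ 2 := tsum_mul_left
          _ ≤ C ^ 2 * (Bψ * ‖f‖ ^ 2) :=
              mul_le_mul_of_nonneg_left (hψ' f).2 (sq_nonneg C)
      have h4 : Real.sqrt (∑' n, a n ^ 2) ≤ C * Real.sqrt Bψ * ‖f‖ := by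
        have heq : C ^ 2 * (Bψ * ‖f‖ ^ 2) = (C * Real.sqrt Bψ * ‖f‖) ^ 2 := by
          rw [mul_pow, mul_pow, Real.sq_sqrt hBψ.le]; ring
        calc Real.sqrt (∑' n, a n ^ 2)
            ≤ Real.sqrt ((C * Real.sqrt Bψ * ‖f‖) ^ 2) :=
              Real.sqrt_le_sqrt (by rw [← heq]; exact h3)
          _ = C * Real.sqrt Bψ * ‖f‖ := Real.sqrt_sq (by positivity)
      have h6 : ‖g‖ ^ 2 ≤ c₀ * ‖g‖ * Real.sqrt T := by
        calc ‖g‖ ^ 2 ≤ ∑' n, a n * b n := h2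
          _ ≤ Real.sqrt (∑' n, a n ^ 2) * Real.sqrt (∑' n, b n ^ 2) := hcs
          _ ≤ (C * Real.sqrt Bψ * ‖f‖) * Real.sqrt T :=
              mul_le_mul_of_nonneg_right h4 (Real.sqrt_nonneg _)
          _ ≤ (C * Real.sqrt Bψ * (K * ‖g‖)) * Real.sqrt T := by
              have hstep : C * Real.sqrt Bψ * ‖f‖ ≤ C * Real.sqrt Bψ * (K * ‖g‖) :=
                mul_le_mul_of_nonneg_left hfn (by positivity)
              exact mul_le_mul_of_nonneg_right hstep (Real.sqrt_nonneg _)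
          _ = c₀ * ‖g‖ * Real.sqrt T := by rw [hc₀]; ring
      have hgpos : 0 < ‖g‖ := norm_pos_iff.2 hg0
      have h7 : ‖g‖ ≤ c₀ * Real.sqrt T := by nlinarith
      have h8 : ‖g‖ ^ 2 ≤ c₀ ^ 2 * T := by
        nlinarith [mul_self_le_mul_self hgpos.le h7, Real.sq_sqrt hTnn,
          Real.sqrt_nonneg T]
      rw [inv_mul_le_iff₀ (by positivity : (0:ℝ) < c₀ ^ 2)]
      linarith
    · -- decomposition
      intro c hc
      have hc2 : Summable fun n => ‖c n‖ ^ 2 := (Stmt5Aux.memℓp_two_iff c).1 hc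
      have hsum := Stmt5Aux.synth_summable hBφ.le hφ' hc2
      set g : H := ∑' n, c n • φ n with hg
      have hgs : HasSum (fun n => c n • φ n) g := hsum.hasSum
      obtain ⟨f, hf⟩ := hsurj g
      refine ⟨c - fun n => m n * ⟪ψ n, f⟫_ℂ, f, ?_, ?_, ?_⟩
      · exact hc.sub ((Stmt5Aux.memℓp_two_iff _).2 (hmem f))
      · have hMf : HasSum (fun n => (m n * ⟪ψ n, f⟫_ℂ) • φ n) g := by
          have he : (fun n => (m n * ⟪ψ n, f⟫_ℂ) • φ n)
              = fun n => m n • ⟪ψ n, f⟫_ℂ • φ n := by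
            funext n; rw [smul_smul]
          rw [he]; exact hf ▸ hM f
        have hd := hgs.sub hMf
        rw [sub_self] at hd
        have he2 : (fun n => (c - fun k => m k * ⟪ψ k, f⟫_ℂ) n • φ n)
            = fun n => c n • φ n - (m n * ⟪ψ n, f⟫_ℂ) • φ n := by
          funext n; simp [sub_smul]
        rw [he2]; exact hd
      · funext n; simp
  · rintro ⟨⟨A, B, hA, hB, hfr⟩, hdec⟩
    intro g
    obtain ⟨f₀, hf₀⟩ := Stmt5Aux.exists_coeff hA hB hfr g
    set c : ℕ → ℂ := fun n => ⟪φ n, f₀⟫_ℂ with hcdef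
    have hc : Memℓp c 2 := (Stmt5Aux.memℓp_two_iff c).2 (hfr f₀).1
    obtain ⟨d, h, hd2, hd0, hcd⟩ := hdec c hc
    refine ⟨h, ?_⟩
    have h1 : HasSum (fun n => (c n - d n) • φ n) g := by
      have hsub := hf₀.sub hd0
      rw [sub_zero] at hsub
      have he : (fun n => (c n - d n) • φ n) = fun n => c n • φ n - d n • φ n := by
        funext n; rw [sub_smul]
      rw [he]; exact hsub
    have h2 : (fun n => (c n - d n) • φ n) = fun n => m n • ⟪ψ n, h⟫_ℂ • φ n := by
      funext n
      have hpt : c n = d n + m n * ⟪ψ n, h⟫_ℂ := by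
        have := congrFun hcd n; simpa using this
      rw [show c n - d n = m n * ⟪ψ n, h⟫_ℂ by rw [hpt]; ring, smul_smul]
    rw [h2] at h1
    exact (hM h).unique h1
end

section
/- Let φ, ψ be Bessel sequences in H and m ∈ ℓ^∞. The multiplier M_{m,φ,ψ} is surjective if and only if mφ = {m_n φ_n} is a frame for H and N(D_{mφ}) + R(C_ψ) = ℓ². -/
open scoped InnerProductSpace
open scoped ENNReal NNReal

/-- Cauchy–Schwarz for tsums of nonneg reals. -/
lemma tsum_cs (a b : ℕ → ℝ) (ha0 : ∀ n, 0 ≤ a n) (hb0 : ∀ n, 0 ≤ b n)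
    (ha : Summable fun n => a n ^ 2) (hb : Summable fun n => b n ^ 2) :
    Summable (fun n => a n * b n) ∧
      ∑' n, a n * b n ≤ Real.sqrt (∑' n, a n ^ 2) * Real.sqrt (∑' n, b n ^ 2) := by
  have hsum : Summable (fun n => a n * b n) := by
    refine Summable.of_nonneg_of_le (fun n => mul_nonneg (ha0 n) (hb0 n))
      (fun n => ?_) ((ha.add hb).mul_left (1/2 : ℝ))
    have := two_mul_le_add_sq (a n) (b n)
    nlinarith [this]
  refine ⟨hsum, Summable.tsum_le_of_sum_le hsum (fun F => ?_)⟩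
  calc ∑ n ∈ F, a n * b n
      ≤ Real.sqrt (∑ n ∈ F, a n ^ 2) * Real.sqrt (∑ n ∈ F, b n ^ 2) :=
        Real.sum_mul_le_sqrt_mul_sqrt F a b
    _ ≤ Real.sqrt (∑' n, a n ^ 2) * Real.sqrt (∑' n, b n ^ 2) := by
        gcongr <;> exact Summable.sum_le_tsum F (fun n _ => sq_nonneg _) (by assumption)

/-- Finset synthesis bound from a Bessel bound. -/
lemma synth_finset_bound {H : Type*} [NormedAddCommGroup H] [InnerProductSpace ℂ H]
    (χ : ℕ → H) (B : ℝ) (hB0 : 0 ≤ B)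
    (hχ : ∀ f : H, Summable (fun n => ‖⟪χ n, f⟫_ℂ‖ ^ 2) ∧ ∑' n, ‖⟪χ n, f⟫_ℂ‖ ^ 2 ≤ B * ‖f‖ ^ 2)
    (d : ℕ → ℂ) (F : Finset ℕ) :
    ‖∑ n ∈ F, d n • χ n‖ ≤ Real.sqrt B * Real.sqrt (∑ n ∈ F, ‖d n‖ ^ 2) := by
  set g : H := ∑ n ∈ F, d n • χ n with hg
  have key : ‖g‖ ^ 2 ≤ (Real.sqrt B * Real.sqrt (∑ n ∈ F, ‖d n‖ ^ 2)) * ‖g‖ := by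
    have h1 : (⟪g, g⟫_ℂ) = ∑ n ∈ F, d n * ⟪g, χ n⟫_ℂ := by
      rw [hg, inner_sum]
      exact Finset.sum_congr rfl fun n _ => inner_smul_right _ _ _
    have h2 : ‖g‖ ^ 2 = ‖(⟪g, g⟫_ℂ)‖ := by
      rw [inner_self_eq_norm_sq_to_K (𝕜 := ℂ)]
      simp [norm_pow]
    rw [h2, h1]
    calc ‖∑ n ∈ F, d n * ⟪g, χ n⟫_ℂ‖
        ≤ ∑ n ∈ F, ‖d n‖ * ‖⟪g, χ n⟫_ℂ‖ := by
          refine (norm_sum_le _ _).trans ?_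
          exact le_of_eq (Finset.sum_congr rfl fun n _ => norm_mul _ _)
      _ ≤ Real.sqrt (∑ n ∈ F, ‖d n‖ ^ 2) * Real.sqrt (∑ n ∈ F, ‖⟪g, χ n⟫_ℂ‖ ^ 2) :=
          Real.sum_mul_le_sqrt_mul_sqrt F _ _
      _ ≤ Real.sqrt (∑ n ∈ F, ‖d n‖ ^ 2) * Real.sqrt (B * ‖g‖ ^ 2) := by
          refine mul_le_mul_of_nonneg_left (Real.sqrt_le_sqrt ?_) (Real.sqrt_nonneg _)
          calc ∑ n ∈ F, ‖⟪g, χ n⟫_ℂ‖ ^ 2 = ∑ n ∈ F, ‖⟪χ n, g⟫_ℂ‖ ^ 2 :=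
                Finset.sum_congr rfl fun n _ => by rw [norm_inner_symm]
            _ ≤ ∑' n, ‖⟪χ n, g⟫_ℂ‖ ^ 2 := Summable.sum_le_tsum F (fun n _ => sq_nonneg _) (hχ g).1
            _ ≤ B * ‖g‖ ^ 2 := (hχ g).2
      _ = (Real.sqrt B * Real.sqrt (∑ n ∈ F, ‖d n‖ ^ 2)) * ‖g‖ := by
          rw [Real.sqrt_mul hB0, Real.sqrt_sq (norm_nonneg g)]; ring
  rcases eq_or_lt_of_le (norm_nonneg g) with h0 | h0
  · rw [← h0]
    positivity
  · nlinarith [key, h0]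

/-- Synthesis operator: convergence and norm bound. -/
lemma synth_hasSum {H : Type*} [NormedAddCommGroup H] [InnerProductSpace ℂ H] [CompleteSpace H]
    (χ : ℕ → H) (B : ℝ) (hB0 : 0 ≤ B)
    (hχ : ∀ f : H, Summable (fun n => ‖⟪χ n, f⟫_ℂ‖ ^ 2) ∧ ∑' n, ‖⟪χ n, f⟫_ℂ‖ ^ 2 ≤ B * ‖f‖ ^ 2)
    (d : ℕ → ℂ) (hd : Summable fun n => ‖d n‖ ^ 2) :
    ∃ g : H, HasSum (fun n => d n • χ n) g ∧
      ‖g‖ ≤ Real.sqrt B * Real.sqrt (∑' n, ‖d n‖ ^ 2) := by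
  have hsum : Summable (fun n => d n • χ n) := by
    rw [summable_iff_vanishing_norm]
    intro ε hε
    have hε' : 0 < (ε / (Real.sqrt B + 1)) ^ 2 := by positivity
    obtain ⟨s, hs⟩ := summable_iff_vanishing_norm.mp hd _ hε'
    refine ⟨s, fun t ht => ?_⟩
    have h1 : ∑ n ∈ t, ‖d n‖ ^ 2 < (ε / (Real.sqrt B + 1)) ^ 2 := by
      have := hs t ht
      have h2 : 0 ≤ ∑ n ∈ t, ‖d n‖ ^ 2 := Finset.sum_nonneg fun n _ => sq_nonneg _
      rwa [Real.norm_of_nonneg h2] at this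
    calc ‖∑ n ∈ t, d n • χ n‖ ≤ Real.sqrt B * Real.sqrt (∑ n ∈ t, ‖d n‖ ^ 2) :=
          synth_finset_bound χ B hB0 hχ d t
      _ ≤ Real.sqrt B * (ε / (Real.sqrt B + 1)) := by
          refine mul_le_mul_of_nonneg_left ?_ (Real.sqrt_nonneg _)
          rw [show (ε / (Real.sqrt B + 1)) = Real.sqrt ((ε / (Real.sqrt B + 1)) ^ 2) by
            rw [Real.sqrt_sq (by positivity)]]
          exact Real.sqrt_le_sqrt h1.le
      _ < ε := by
          rw [div_eq_inv_mul, ← mul_assoc]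
          have h3 : Real.sqrt B * (Real.sqrt B + 1)⁻¹ < 1 := by
            rw [mul_inv_lt_iff₀ (by positivity), one_mul]
            linarith [Real.sqrt_nonneg B]
          nlinarith [h3, hε]
  obtain ⟨g, hg⟩ := hsum
  refine ⟨g, hg, ?_⟩
  have htend : Filter.Tendsto (fun F : Finset ℕ => ‖∑ n ∈ F, d n • χ n‖)
      Filter.atTop (nhds ‖g‖) := hg.norm
  refine le_of_tendsto htend (Filter.Eventually.of_forall fun F => ?_)
  calc ‖∑ n ∈ F, d n • χ n‖ ≤ Real.sqrt B * Real.sqrt (∑ n ∈ F, ‖d n‖ ^ 2) :=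
        synth_finset_bound χ B hB0 hχ d F
    _ ≤ Real.sqrt B * Real.sqrt (∑' n, ‖d n‖ ^ 2) := by
        refine mul_le_mul_of_nonneg_left (Real.sqrt_le_sqrt ?_) (Real.sqrt_nonneg _)
        exact Summable.sum_le_tsum F (fun n _ => sq_nonneg _) hd

lemma memℓp_two_iff' {c : ℕ → ℂ} : Memℓp c 2 ↔ Summable (fun n => ‖c n‖ ^ 2) := by
  have h2 : (0:ℝ) < (2 : ℝ≥0∞).toReal := by norm_num
  rw [memℓp_gen_iff h2]
  have : ∀ x : ℝ, 0 ≤ x → x ^ (2 : ℝ≥0∞).toReal = x ^ 2 := by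
    intro x hx
    rw [show (2 : ℝ≥0∞).toReal = ((2:ℕ):ℝ) by norm_num, Real.rpow_natCast]
  exact summable_congr fun n => by rw [this _ (norm_nonneg _)]

/-- `M_{m,φ,ψ}` is surjective iff `mφ` is a frame and `N(D_{mφ}) + R(C_ψ) = ℓ²`. -/
theorem stmt6 {H : Type*} [NormedAddCommGroup H] [InnerProductSpace ℂ H] [CompleteSpace H]
    (φ ψ : ℕ → H)
    (hφ : ∃ Bφ : ℝ, 0 < Bφ ∧ ∀ f : H, Summable (fun n => ‖⟪φ n, f⟫_ℂ‖ ^ 2) ∧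
      ∑' n, ‖⟪φ n, f⟫_ℂ‖ ^ 2 ≤ Bφ * ‖f‖ ^ 2)
    (hψ : ∃ Bψ : ℝ, 0 < Bψ ∧ ∀ f : H, Summable (fun n => ‖⟪ψ n, f⟫_ℂ‖ ^ 2) ∧
      ∑' n, ‖⟪ψ n, f⟫_ℂ‖ ^ 2 ≤ Bψ * ‖f‖ ^ 2)
    (m : ℕ → ℂ) (hm : ∃ C : ℝ, ∀ n, ‖m n‖ ≤ C)
    (M : H →L[ℂ] H)
    (hM : ∀ f : H, HasSum (fun n => m n • ⟪ψ n, f⟫_ℂ • φ n) (M f)) :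
    Function.Surjective ⇑M ↔
      ((∃ A B : ℝ, 0 < A ∧ 0 < B ∧ ∀ f : H,
          Summable (fun n => ‖⟪m n • φ n, f⟫_ℂ‖ ^ 2) ∧
          A * ‖f‖ ^ 2 ≤ ∑' n, ‖⟪m n • φ n, f⟫_ℂ‖ ^ 2 ∧
          ∑' n, ‖⟪m n • φ n, f⟫_ℂ‖ ^ 2 ≤ B * ‖f‖ ^ 2) ∧
       ∀ c : ℕ → ℂ, Memℓp c 2 →
         ∃ (d : ℕ → ℂ) (f : H), Memℓp d 2 ∧
           HasSum (fun n => d n • (m n • φ n)) 0 ∧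
           c = d + fun n => ⟪ψ n, f⟫_ℂ) := by
  obtain ⟨Bφ, hBφ0, hBφ⟩ := hφ
  obtain ⟨Bψ, hBψ0, hBψ⟩ := hψ
  obtain ⟨C, hC⟩ := hm
  have hC0 : 0 ≤ C := le_trans (norm_nonneg _) (hC 0)
  set χ : ℕ → H := fun n => m n • φ n with hχdef
  set Bχ : ℝ := C ^ 2 * Bφ + 1 with hBχdef
  have hBχ0 : 0 < Bχ := by positivity
  -- χ is a Bessel sequence
  have hχB : ∀ f : H, Summable (fun n => ‖⟪χ n, f⟫_ℂ‖ ^ 2) ∧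
      ∑' n, ‖⟪χ n, f⟫_ℂ‖ ^ 2 ≤ Bχ * ‖f‖ ^ 2 := by
    intro f
    have hterm : ∀ n, ‖⟪χ n, f⟫_ℂ‖ ^ 2 = ‖m n‖ ^ 2 * ‖⟪φ n, f⟫_ℂ‖ ^ 2 := by
      intro n
      rw [hχdef]
      simp only [inner_smul_left, norm_mul, RCLike.norm_conj]
      ring
    have hle : ∀ n, ‖⟪χ n, f⟫_ℂ‖ ^ 2 ≤ C ^ 2 * ‖⟪φ n, f⟫_ℂ‖ ^ 2 := by
      intro n
      rw [hterm n]
      exact mul_le_mul_of_nonneg_right (pow_le_pow_left₀ (norm_nonneg _) (hC n) 2)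
        (sq_nonneg _)
    have hsum : Summable (fun n => ‖⟪χ n, f⟫_ℂ‖ ^ 2) :=
      Summable.of_nonneg_of_le (fun n => sq_nonneg _) hle ((hBφ f).1.mul_left (C ^ 2))
    refine ⟨hsum, ?_⟩
    calc ∑' n, ‖⟪χ n, f⟫_ℂ‖ ^ 2 ≤ ∑' n, C ^ 2 * ‖⟪φ n, f⟫_ℂ‖ ^ 2 :=
          Summable.tsum_le_tsum hle hsum ((hBφ f).1.mul_left (C ^ 2))
      _ = C ^ 2 * ∑' n, ‖⟪φ n, f⟫_ℂ‖ ^ 2 := tsum_mul_left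
      _ ≤ C ^ 2 * (Bφ * ‖f‖ ^ 2) := by
          refine mul_le_mul_of_nonneg_left (hBφ f).2 (sq_nonneg _)
      _ ≤ Bχ * ‖f‖ ^ 2 := by rw [hBχdef]; nlinarith [sq_nonneg ‖f‖]
  -- rewrite hM
  have hMχ : ∀ f : H, HasSum (fun n => ⟪ψ n, f⟫_ℂ • χ n) (M f) := by
    intro f
    have heq : (fun n => m n • ⟪ψ n, f⟫_ℂ • φ n) = fun n => ⟪ψ n, f⟫_ℂ • χ n := by
      funext n
      rw [hχdef, smul_smul, smul_smul, mul_comm]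
    exact heq ▸ hM f
  constructor
  · -- forward direction
    intro hsurj
    obtain ⟨C₂, hC₂0, hpre⟩ := M.exists_preimage_norm_le hsurj
    constructor
    · -- frame property
      refine ⟨1 / (Bψ * C₂ ^ 2), Bχ, by positivity, hBχ0, fun g => ?_⟩
      refine ⟨(hχB g).1, ?_, (hχB g).2⟩
      -- lower bound
      obtain ⟨f, hfM, hfn⟩ := hpre g
      set T : ℝ := ∑' n, ‖⟪χ n, g⟫_ℂ‖ ^ 2 with hTdef
      have hT0 : 0 ≤ T := tsum_nonneg fun n => sq_nonneg _
      rcases eq_or_lt_of_le (norm_nonneg g) with h0 | h0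
      · rw [← h0]
        simpa using hT0
      have hinner : HasSum (fun n => ⟪ψ n, f⟫_ℂ * ⟪g, χ n⟫_ℂ) ⟪g, M f⟫_ℂ := by
        have h := (hMχ f).mapL (innerSL ℂ g)
        simpa [inner_smul_right] using h
      have hcinner : ∀ n, ‖⟪g, χ n⟫_ℂ‖ = ‖⟪χ n, g⟫_ℂ‖ := fun n => norm_inner_symm _ _
      have hcs := tsum_cs (fun n => ‖⟪ψ n, f⟫_ℂ‖) (fun n => ‖⟪g, χ n⟫_ℂ‖)
        (fun n => norm_nonneg _) (fun n => norm_nonneg _) (hBψ f).1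
        (by simpa only [hcinner] using (hχB g).1)
      have hg2 : ‖g‖ ^ 2 ≤ ∑' n, ‖⟪ψ n, f⟫_ℂ‖ * ‖⟪g, χ n⟫_ℂ‖ := by
        have h1 : (‖g‖ : ℝ) ^ 2 = ‖(⟪g, M f⟫_ℂ)‖ := by
          rw [hfM, inner_self_eq_norm_sq_to_K (𝕜 := ℂ)]
          simp
        rw [h1, ← hinner.tsum_eq]
        refine (norm_tsum_le_tsum_norm ?_).trans (le_of_eq ?_)
        · simpa only [norm_mul] using hcs.1
        · exact tsum_congr fun n => norm_mul _ _
      have hT2 : ∑' n, ‖⟪g, χ n⟫_ℂ‖ ^ 2 = T := by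
        rw [hTdef]
        exact tsum_congr fun n => by rw [hcinner]
      have hbd : ‖g‖ ^ 2 ≤ Real.sqrt Bψ * (C₂ * ‖g‖) * Real.sqrt T := by
        refine hg2.trans (hcs.2.trans ?_)
        rw [hT2]
        have h1 : Real.sqrt (∑' n, ‖⟪ψ n, f⟫_ℂ‖ ^ 2) ≤ Real.sqrt Bψ * ‖f‖ := by
          rw [show Real.sqrt Bψ * ‖f‖ = Real.sqrt (Bψ * ‖f‖ ^ 2) by
            rw [Real.sqrt_mul hBψ0.le, Real.sqrt_sq (norm_nonneg f)]]
          exact Real.sqrt_le_sqrt (hBψ f).2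
        have h2 : Real.sqrt Bψ * ‖f‖ ≤ Real.sqrt Bψ * (C₂ * ‖g‖) :=
          mul_le_mul_of_nonneg_left hfn (Real.sqrt_nonneg _)
        refine mul_le_mul_of_nonneg_right ((h1.trans h2)) (Real.sqrt_nonneg _)
      -- conclude
      have hgle : ‖g‖ ≤ Real.sqrt Bψ * C₂ * Real.sqrt T := by
        nlinarith [hbd, h0]
      have hsq : ‖g‖ ^ 2 ≤ Bψ * C₂ ^ 2 * T := by
        calc ‖g‖ ^ 2 ≤ (Real.sqrt Bψ * C₂ * Real.sqrt T) ^ 2 :=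
              pow_le_pow_left₀ (norm_nonneg g) hgle 2
          _ = Bψ * C₂ ^ 2 * T := by
              rw [mul_pow, mul_pow, Real.sq_sqrt hBψ0.le, Real.sq_sqrt hT0]
      rw [div_mul_eq_mul_div, one_mul, div_le_iff₀ (by positivity)]
      nlinarith [hsq]
    · -- splitting
      intro c hc
      have hc2 : Summable (fun n => ‖c n‖ ^ 2) := memℓp_two_iff'.mp hc
      obtain ⟨g, hgsum, -⟩ := synth_hasSum χ Bχ hBχ0.le hχB c hc2
      obtain ⟨f, hf⟩ := hsurj g
      refine ⟨fun n => c n - ⟪ψ n, f⟫_ℂ, f, ?_, ?_, ?_⟩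
      · exact hc.sub (memℓp_two_iff'.mpr (hBψ f).1)
      · have hMf : HasSum (fun n => ⟪ψ n, f⟫_ℂ • χ n) g := hf ▸ hMχ f
        have := hgsum.sub hMf
        simpa [sub_smul] using this
      · funext n; simp
  · -- backward direction
    rintro ⟨⟨A, B, hA, hB, hframe⟩, hsplit⟩
    have hχB' : ∀ f : H, Summable (fun n => ‖⟪χ n, f⟫_ℂ‖ ^ 2) ∧
        ∑' n, ‖⟪χ n, f⟫_ℂ‖ ^ 2 ≤ B * ‖f‖ ^ 2 := fun f => ⟨(hframe f).1, (hframe f).2.2⟩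
    -- frame operator
    have hS : ∀ f : H, ∃ g : H, HasSum (fun n => ⟪χ n, f⟫_ℂ • χ n) g ∧
        ‖g‖ ≤ Real.sqrt B * Real.sqrt (∑' n, ‖⟪χ n, f⟫_ℂ‖ ^ 2) :=
      fun f => synth_hasSum χ B hB.le hχB' _ (hframe f).1
    set S0 : H → H := fun f => (hS f).choose with hS0def
    have hS0 : ∀ f : H, HasSum (fun n => ⟪χ n, f⟫_ℂ • χ n) (S0 f) :=
      fun f => (hS f).choose_spec.1
    have hS0add : ∀ f g : H, S0 (f + g) = S0 f + S0 g := by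
      intro f g
      refine (hS0 (f + g)).unique (((hS0 f).add (hS0 g)).congr_fun fun n => ?_)
      rw [inner_add_right, add_smul]
    have hS0smul : ∀ (a : ℂ) (f : H), S0 (a • f) = a • S0 f := by
      intro a f
      refine (hS0 (a • f)).unique (((hS0 f).const_smul a).congr_fun fun n => ?_)
      rw [inner_smul_right, mul_smul]
    have hS0bound : ∀ f : H, ‖S0 f‖ ≤ B * ‖f‖ := by
      intro f
      refine (hS f).choose_spec.2.trans ?_
      calc Real.sqrt B * Real.sqrt (∑' n, ‖⟪χ n, f⟫_ℂ‖ ^ 2)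
          ≤ Real.sqrt B * Real.sqrt (B * ‖f‖ ^ 2) :=
            mul_le_mul_of_nonneg_left (Real.sqrt_le_sqrt (hχB' f).2) (Real.sqrt_nonneg _)
        _ = B * ‖f‖ := by
            rw [Real.sqrt_mul hB.le, Real.sqrt_sq (norm_nonneg f), ← mul_assoc,
              Real.mul_self_sqrt hB.le]
    set Slin : H →ₗ[ℂ] H :=
      { toFun := S0, map_add' := hS0add, map_smul' := hS0smul } with hSlindef
    set S : H →L[ℂ] H := Slin.mkContinuous B hS0bound with hSdef
    have hSapp : ∀ f : H, S f = S0 f := fun f => rfl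
    -- inner product identity
    have hSinner : ∀ f : H, (⟪f, S f⟫_ℂ) = ((∑' n, ‖⟪χ n, f⟫_ℂ‖ ^ 2 : ℝ) : ℂ) := by
      intro f
      have h1 : HasSum (fun n => (⟪χ n, f⟫_ℂ) * ⟪f, χ n⟫_ℂ) ⟪f, S f⟫_ℂ := by
        have h := (hS0 f).mapL (innerSL ℂ f)
        rw [hSapp]
        simpa [inner_smul_right] using h
      have h2 : HasSum (fun n => ((‖⟪χ n, f⟫_ℂ‖ ^ 2 : ℝ) : ℂ))
          ((∑' n, ‖⟪χ n, f⟫_ℂ‖ ^ 2 : ℝ) : ℂ) := by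
        exact ((hframe f).1.hasSum).mapL Complex.ofRealCLM
      refine h1.unique (h2.congr_fun fun n => ?_)
      rw [← inner_conj_symm f (χ n), RCLike.mul_conj]
      norm_cast
    -- S is bounded below
    have hSlow : ∀ f : H, A * ‖f‖ ^ 2 ≤ ‖f‖ * ‖S f‖ := by
      intro f
      calc A * ‖f‖ ^ 2 ≤ ∑' n, ‖⟪χ n, f⟫_ℂ‖ ^ 2 := (hframe f).2.1
        _ = Complex.re ⟪f, S f⟫_ℂ := by rw [hSinner f, Complex.ofReal_re]
        _ ≤ ‖(⟪f, S f⟫_ℂ)‖ := Complex.re_le_norm _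
        _ ≤ ‖f‖ * ‖S f‖ := norm_inner_le_norm f (S f)
    have hSbelow : ∀ f : H, ‖f‖ ≤ A⁻¹ * ‖S f‖ := by
      intro f
      rcases eq_or_lt_of_le (norm_nonneg f) with h0 | h0
      · rw [← h0]; positivity
      · have := hSlow f
        rw [le_inv_mul_iff₀ hA] at *
        nlinarith [this, h0]
    have hanti : AntilipschitzWith (Real.toNNReal A⁻¹) ⇑S := by
      refine S.antilipschitz_of_bound fun x => ?_
      rw [Real.coe_toNNReal _ (by positivity)]
      exact hSbelow x
    have hclosed : IsClosed (Set.range ⇑S) := hanti.isClosed_range S.uniformContinuous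
    -- dense range
    have horth : (LinearMap.range (S : H →ₗ[ℂ] H))ᗮ = ⊥ := by
      rw [Submodule.eq_bot_iff]
      intro g hg
      have h1 : (⟪S g, g⟫_ℂ) = 0 :=
        (Submodule.mem_orthogonal _ g).mp hg (S g) ⟨g, rfl⟩
      have h2 : (⟪g, S g⟫_ℂ) = 0 := by
        rw [← inner_conj_symm g (S g), h1, map_zero]
      have h3 : (∑' n, ‖⟪χ n, g⟫_ℂ‖ ^ 2 : ℝ) = 0 := by
        have := hSinner g
        rw [h2] at this
        exact_mod_cast this.symm
      have h4 : A * ‖g‖ ^ 2 ≤ 0 := h3 ▸ (hframe g).2.1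
      have h5 : ‖g‖ = 0 := by
        by_contra hne
        have hp : (0:ℝ) < ‖g‖ := (norm_nonneg g).lt_of_ne (Ne.symm hne)
        nlinarith [mul_pos hA (pow_pos hp 2)]
      exact norm_eq_zero.mp h5
    have hrange : Set.range ⇑S = Set.univ := by
      have htop : (LinearMap.range (S : H →ₗ[ℂ] H)).topologicalClosure = ⊤ :=
        Submodule.topologicalClosure_eq_top_iff.mpr horth
      have h1 : closure (Set.range ⇑S) = Set.univ := by
        have := congrArg (fun K : Submodule ℂ H => (K : Set H)) htop
        simp only [Submodule.topologicalClosure_coe, Submodule.top_coe] at this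
        exact this
      rw [← hclosed.closure_eq, h1]
    have hSsurj : Function.Surjective ⇑S := fun g => by
      have : g ∈ Set.range ⇑S := hrange ▸ Set.mem_univ g
      exact this
    -- conclude surjectivity of M
    intro g
    obtain ⟨h, hh⟩ := hSsurj g
    have hc2 : Memℓp (fun n => ⟪χ n, h⟫_ℂ) 2 := memℓp_two_iff'.mpr (hframe h).1
    obtain ⟨d, f, hd2, hdsum, heq⟩ := hsplit _ hc2
    refine ⟨f, ?_⟩
    have h1 : HasSum (fun n => (⟪χ n, h⟫_ℂ - d n) • χ n) g := by
      have h2 : HasSum (fun n => ⟪χ n, h⟫_ℂ • χ n) g := by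
        rw [← hh, hSapp]; exact hS0 h
      simpa [sub_smul] using h2.sub hdsum
    have h3 : ∀ n, ⟪χ n, h⟫_ℂ - d n = ⟪ψ n, f⟫_ℂ := by
      intro n
      have := congrFun heq n
      simp only [Pi.add_apply] at this
      rw [this]; ring
    exact (hMχ f).unique (h1.congr_fun fun n => by rw [h3 n])
end

section
/- Let φ be a frame for H and m a complex sequence such that mφ = {m_n φ_n} is also a frame for H. Then φ and mφ have the same excess, where the excess of a sequence χ is e(χ) = sup{|I| : I ⊆ ℕ and the closed span of {χ_n}_{n∈ℕ∖I} equals the closed span of {χ_n}_{n∈ℕ}}. -/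
open scoped InnerProductSpace

/-- The excess of a sequence: the supremum of cardinalities of sets `I ⊆ ℕ` whose removal
does not change the closed linear span. -/
noncomputable def excess {H : Type*} [NormedAddCommGroup H] [InnerProductSpace ℂ H]
    (χ : ℕ → H) : ℕ∞ :=
  sSup {c : ℕ∞ | ∃ I : Set ℕ, I.encard = c ∧
    (Submodule.span ℂ (χ '' Iᶜ)).topologicalClosure =
      (Submodule.span ℂ (Set.range χ)).topologicalClosure}

section Aux

variable {H : Type*} [NormedAddCommGroup H] [InnerProductSpace ℂ H]

open Set Submodule

/-- Totality of the family restricted to `S`. -/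
def Tot (φ : ℕ → H) (S : Set ℕ) : Prop :=
  (Submodule.span ℂ (φ '' S)).topologicalClosure = ⊤

lemma Tot.mono {φ : ℕ → H} {S S' : Set ℕ} (h : S ⊆ S') (hS : Tot φ S) : Tot φ S' :=
  top_unique (hS ▸ Submodule.topologicalClosure_mono (Submodule.span_mono (Set.image_mono h)))

/-- A frame is total. -/
lemma tot_of_frame {φ : ℕ → H} [CompleteSpace H]
    (hφ : ∃ A B : ℝ, 0 < A ∧ 0 < B ∧ ∀ f : H,
      Summable (fun n => ‖⟪φ n, f⟫_ℂ‖ ^ 2) ∧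
      A * ‖f‖ ^ 2 ≤ ∑' n, ‖⟪φ n, f⟫_ℂ‖ ^ 2 ∧
      ∑' n, ‖⟪φ n, f⟫_ℂ‖ ^ 2 ≤ B * ‖f‖ ^ 2) :
    (Submodule.span ℂ (Set.range φ)).topologicalClosure = ⊤ := by
  obtain ⟨A, B, hA, hB, h⟩ := hφ
  rw [Submodule.topologicalClosure_eq_top_iff, Submodule.eq_bot_iff]
  intro f hf
  have hall : ∀ n, ⟪φ n, f⟫_ℂ = 0 := fun n =>
    (Submodule.mem_orthogonal _ f).1 hf _ (Submodule.subset_span (Set.mem_range_self n))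
  have h0 : (∑' n, ‖⟪φ n, f⟫_ℂ‖ ^ 2) = 0 := by
    have hz : (fun n => ‖⟪φ n, f⟫_ℂ‖ ^ 2) = fun _ => (0 : ℝ) := by
      funext n; rw [hall n]; simp
    rw [hz, tsum_zero]
  have h1 := (h f).2.1
  rw [h0] at h1
  have h2 : ‖f‖ ^ 2 = 0 := le_antisymm (by nlinarith) (by positivity)
  have h3 : ‖f‖ = 0 := sq_eq_zero_iff.mp h2
  simpa using h3

lemma span_smul_image (φ : ℕ → H) (m : ℕ → ℂ) (S : Set ℕ) :
    Submodule.span ℂ ((fun n => m n • φ n) '' S)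
      = Submodule.span ℂ (φ '' (S \ {n | m n = 0})) := by
  apply le_antisymm
  · rw [Submodule.span_le]
    rintro _ ⟨n, hn, rfl⟩
    by_cases hm : m n = 0
    · simp [hm]
    · exact Submodule.smul_mem _ _ (Submodule.subset_span ⟨n, ⟨hn, hm⟩, rfl⟩)
  · rw [Submodule.span_le]
    rintro _ ⟨n, ⟨hn, hm⟩, rfl⟩
    have : φ n = (m n)⁻¹ • (m n • φ n) := by
      rw [smul_smul, inv_mul_cancel₀ hm, one_smul]
    rw [this]
    exact Submodule.smul_mem _ _ (Submodule.subset_span ⟨n, hn, rfl⟩)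

/-- A closed submodule plus a line is closed. -/
lemma isClosed_sup_span_singleton (W : Submodule ℂ H) (hW : IsClosed (W : Set H)) (x : H) :
    IsClosed ((W ⊔ Submodule.span ℂ {x} : Submodule ℂ H) : Set H) := by
  haveI : IsClosed (W : Set H) := hW
  have hcont : Continuous W.mkQ := continuous_quot_mk
  haveI : FiniteDimensional ℂ (Submodule.span ℂ ({x} : Set H)) :=
    FiniteDimensional.span_of_finite ℂ (Set.finite_singleton x)
  have hfd : FiniteDimensional ℂ (Submodule.map W.mkQ (Submodule.span ℂ ({x} : Set H))) :=
    Module.Finite.map _ _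
  have hclosed : IsClosed ((Submodule.map W.mkQ (Submodule.span ℂ ({x} : Set H))) :
      Set (H ⧸ W)) := Submodule.closed_of_finiteDimensional _
  have key : (W ⊔ Submodule.span ℂ {x} : Submodule ℂ H)
      = Submodule.comap W.mkQ (Submodule.map W.mkQ (Submodule.span ℂ ({x} : Set H))) :=
    (Submodule.comap_map_mkQ W _).symm
  rw [key]
  exact hclosed.preimage hcont

/-- The exchange lemma: if the family minus `insert z (A ∪ B)` is not total but the family minus
`A ∪ B` is, then deleting `z` can be compensated by adding back at most one element of `A`. -/
lemma exchange [CompleteSpace H] (φ : ℕ → H) (z : ℕ) (A B : Set ℕ)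
    (hzAB : z ∉ A ∪ B) (hdisj : A ∩ B = ∅)
    (hAB : Tot φ (A ∪ B)ᶜ) (hz : Tot φ (insert z B)ᶜ) :
    ∃ A' ⊆ A, A.encard ≤ A'.encard + 1 ∧ Tot φ (insert z (A' ∪ B))ᶜ := by
  set W := (Submodule.span ℂ (φ '' (insert z (A ∪ B))ᶜ)).topologicalClosure with hWdef
  have hWc : IsClosed (W : Set H) := Submodule.isClosed_topologicalClosure _
  by_cases hW : W = ⊤
  · exact ⟨A, subset_rfl, le_self_add, hW⟩
  -- the closed subspace W together with φ z spans everything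
  have hV : W ⊔ Submodule.span ℂ {φ z} = ⊤ := by
    apply top_unique
    rw [← hAB]
    refine Submodule.topologicalClosure_minimal _ ?_ (isClosed_sup_span_singleton W hWc (φ z))
    rw [Submodule.span_le]
    rintro _ ⟨n, hn, rfl⟩
    by_cases hnz : n = z
    · subst hnz
      exact Submodule.mem_sup_right (Submodule.subset_span rfl)
    · refine Submodule.mem_sup_left (Submodule.le_topologicalClosure _
        (Submodule.subset_span ⟨n, ?_, rfl⟩))
      intro hmem
      rcases Set.mem_insert_iff.mp hmem with h | h
      · exact hnz h
      · exact hn h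
  by_cases hex : ∃ i ∈ A, φ i ∉ W
  · obtain ⟨i, hiA, hiW⟩ := hex
    refine ⟨A \ {i}, Set.diff_subset, le_of_eq (Set.encard_diff_singleton_add_one hiA).symm, ?_⟩
    set M := (Submodule.span ℂ (φ '' (insert z ((A \ {i}) ∪ B))ᶜ)).topologicalClosure with hMdef
    have hWM : W ≤ M := by
      apply Submodule.topologicalClosure_mono
      apply Submodule.span_mono
      apply Set.image_mono
      apply Set.compl_subset_compl.mpr
      exact Set.insert_subset_insert (Set.union_subset_union_left B Set.diff_subset)
    have hiB : i ∉ B := fun h => by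
      have : i ∈ A ∩ B := ⟨hiA, h⟩
      rw [hdisj] at this; exact this
    have hiz : i ≠ z := fun h => hzAB (h ▸ Set.mem_union_left B hiA)
    have hiM : φ i ∈ M := by
      refine Submodule.le_topologicalClosure _ (Submodule.subset_span ⟨i, ?_, rfl⟩)
      intro hmem
      rcases Set.mem_insert_iff.mp hmem with h | h
      · exact hiz h
      · rcases Set.mem_union _ _ _ |>.mp h with h | h
        · exact h.2 rfl
        · exact hiB h
    have hφi : φ i ∈ W ⊔ Submodule.span ℂ {φ z} := hV ▸ Submodule.mem_top
    obtain ⟨w, hw, v, hv, hwv⟩ := Submodule.mem_sup.mp hφi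
    obtain ⟨c, rfl⟩ := Submodule.mem_span_singleton.mp hv
    have hc : c ≠ 0 := by
      rintro rfl
      rw [zero_smul, add_zero] at hwv
      exact hiW (hwv ▸ hw)
    have hzM : φ z ∈ M := by
      have heq : φ z = c⁻¹ • (φ i - w) := by
        rw [← hwv, add_sub_cancel_left, smul_smul, inv_mul_cancel₀ hc, one_smul]
      rw [heq]
      exact M.smul_mem _ (M.sub_mem hiM (hWM hw))
    show M = ⊤
    apply top_unique
    rw [← hV]
    exact sup_le hWM ((Submodule.span_singleton_le_iff_mem _ _).mpr hzM)
  · exfalso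
    apply hW
    push_neg at hex
    apply top_unique
    rw [← hz]
    refine Submodule.topologicalClosure_minimal _ ?_ hWc
    rw [Submodule.span_le]
    rintro _ ⟨n, hn, rfl⟩
    simp only [Set.mem_compl_iff, Set.mem_insert_iff] at hn
    push_neg at hn
    by_cases hnA : n ∈ A
    · exact hex n hnA
    · refine Submodule.le_topologicalClosure _ (Submodule.subset_span ⟨n, ?_, rfl⟩)
      intro hmem
      rcases Set.mem_insert_iff.mp hmem with h | h
      · exact hn.1 h
      · rcases Set.mem_union _ _ _ |>.mp h with h | h
        · exact hnA h
        · exact hn.2 h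

/-- Key lemma: any finite removable set `I` can be traded for a removable set of the form
`I' ∪ Z` with `|I| ≤ |I'| + |Z|`, where `Z` is a fixed finite removable set. -/
lemma key [CompleteSpace H] (φ : ℕ → H) {Z : Set ℕ} (hZ : Z.Finite) :
    ∀ I : Set ℕ, I.Finite → Tot φ Iᶜ → Tot φ Zᶜ →
      ∃ I' : Set ℕ, I'.Finite ∧ I' ∩ Z = ∅ ∧ I.encard ≤ I'.encard + Z.encard ∧
        Tot φ (I' ∪ Z)ᶜ := by
  refine Set.Finite.induction_on (motive := fun Z _ => ∀ I : Set ℕ, I.Finite → Tot φ Iᶜ → Tot φ Zᶜ →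
      ∃ I' : Set ℕ, I'.Finite ∧ I' ∩ Z = ∅ ∧ I.encard ≤ I'.encard + Z.encard ∧
        Tot φ (I' ∪ Z)ᶜ) Z hZ ?_ ?_
  · intro I hIf hI _
    exact ⟨I, hIf, Set.inter_empty I, by simp, by simpa using hI⟩
  · intro z Z₀ hzZ₀ hZ₀f IH
    intro I hIf hI hZtot
    have hZ₀tot : Tot φ Z₀ᶜ :=
      hZtot.mono (Set.compl_subset_compl.mpr (Set.subset_insert z Z₀))
    obtain ⟨I₁, hI₁f, hI₁Z₀, hcard₁, hI₁tot⟩ := IH I hIf hI hZ₀tot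
    have hd : ∀ n : ℕ, n ∈ I₁ → n ∈ Z₀ → False := fun n h1 h2 => by
      have hmem : n ∈ I₁ ∩ Z₀ := ⟨h1, h2⟩
      rw [hI₁Z₀] at hmem
      exact hmem
    by_cases hzI₁ : z ∈ I₁
    · refine ⟨I₁ \ {z}, hI₁f.subset Set.diff_subset, ?_, ?_, ?_⟩
      · ext n
        simp only [Set.mem_inter_iff, Set.mem_diff, Set.mem_singleton_iff,
          Set.mem_insert_iff, Set.mem_empty_iff_false, iff_false, not_and]
        rintro ⟨hn1, hn2⟩ (rfl | hn3)
        · exact absurd rfl hn2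
        · exact hd n hn1 hn3
      · calc I.encard ≤ I₁.encard + Z₀.encard := hcard₁
          _ = ((I₁ \ {z}).encard + 1) + Z₀.encard := by
              rw [Set.encard_diff_singleton_add_one hzI₁]
          _ = (I₁ \ {z}).encard + (insert z Z₀).encard := by
              rw [Set.encard_insert_of_notMem hzZ₀]; ring
      · have hset : (I₁ \ {z}) ∪ insert z Z₀ = I₁ ∪ Z₀ := by
          ext n
          simp only [Set.mem_union, Set.mem_diff, Set.mem_singleton_iff, Set.mem_insert_iff]
          constructor
          · rintro (⟨h1, _⟩ | rfl | h2)
            · exact Or.inl h1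
            · exact Or.inl hzI₁
            · exact Or.inr h2
          · rintro (h1 | h2)
            · by_cases hnz : n = z
              · exact Or.inr (Or.inl hnz)
              · exact Or.inl ⟨h1, hnz⟩
            · exact Or.inr (Or.inr h2)
        rw [hset]
        exact hI₁tot
    · have hzAB : z ∉ I₁ ∪ Z₀ := by
        simp only [Set.mem_union]
        push_neg
        exact ⟨hzI₁, hzZ₀⟩
      obtain ⟨A', hA'I₁, hA'card, hA'tot⟩ :=
        exchange φ z I₁ Z₀ hzAB hI₁Z₀ hI₁tot hZtot
      refine ⟨A', hI₁f.subset hA'I₁, ?_, ?_, ?_⟩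
      · ext n
        simp only [Set.mem_inter_iff, Set.mem_insert_iff, Set.mem_empty_iff_false, iff_false,
          not_and]
        rintro hn (rfl | hn2)
        · exact hzI₁ (hA'I₁ hn)
        · exact hd n (hA'I₁ hn) hn2
      · calc I.encard ≤ I₁.encard + Z₀.encard := hcard₁
          _ ≤ (A'.encard + 1) + Z₀.encard := add_le_add_left hA'card _
          _ = A'.encard + (insert z Z₀).encard := by
              rw [Set.encard_insert_of_notMem hzZ₀]; ring
      · have hset : A' ∪ insert z Z₀ = insert z (A' ∪ Z₀) := by
          ext n
          simp only [Set.mem_union, Set.mem_insert_iff]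
          tauto
        rw [hset]
        exact hA'tot

lemma enat_eq_top {a : ℕ∞} (h : ∀ n : ℕ, (n : ℕ∞) ≤ a) : a = ⊤ := by
  cases a with
  | top => rfl
  | coe k =>
    have := h (k + 1)
    rw [Nat.cast_le (α := ℕ∞)] at *
    exact absurd (by exact_mod_cast this) (by omega)

end Aux

/-- If `φ` and `mφ` are both frames, they have the same excess. -/
theorem stmt8 {H : Type*} [NormedAddCommGroup H] [InnerProductSpace ℂ H] [CompleteSpace H]
    (φ : ℕ → H) (m : ℕ → ℂ)
    (hφ : ∃ A B : ℝ, 0 < A ∧ 0 < B ∧ ∀ f : H,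
      Summable (fun n => ‖⟪φ n, f⟫_ℂ‖ ^ 2) ∧
      A * ‖f‖ ^ 2 ≤ ∑' n, ‖⟪φ n, f⟫_ℂ‖ ^ 2 ∧
      ∑' n, ‖⟪φ n, f⟫_ℂ‖ ^ 2 ≤ B * ‖f‖ ^ 2)
    (hmφ : ∃ A B : ℝ, 0 < A ∧ 0 < B ∧ ∀ f : H,
      Summable (fun n => ‖⟪m n • φ n, f⟫_ℂ‖ ^ 2) ∧
      A * ‖f‖ ^ 2 ≤ ∑' n, ‖⟪m n • φ n, f⟫_ℂ‖ ^ 2 ∧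
      ∑' n, ‖⟪m n • φ n, f⟫_ℂ‖ ^ 2 ≤ B * ‖f‖ ^ 2) :
    excess φ = excess (fun n => m n • φ n) := by
  classical
  set Z : Set ℕ := {n | m n = 0} with hZdef
  set mφ : ℕ → H := fun n => m n • φ n with hmφdef
  have hTφ : (Submodule.span ℂ (Set.range φ)).topologicalClosure = ⊤ := tot_of_frame hφ
  have hTmφ : (Submodule.span ℂ (Set.range mφ)).topologicalClosure = ⊤ := tot_of_frame hmφ
  have hrange_m : Submodule.span ℂ (Set.range mφ) = Submodule.span ℂ (φ '' Zᶜ) := by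
    rw [← Set.image_univ, span_smul_image]
    congr 1
    rw [← Set.compl_eq_univ_diff]
  have hdiff : ∀ S : Set ℕ, Sᶜ \ Z = (S ∪ Z)ᶜ := by
    intro S; rw [Set.diff_eq, ← Set.compl_union]
  have hPZc : Tot φ Zᶜ := by
    unfold Tot
    rw [← hrange_m]
    exact hTmφ
  -- characterization of membership for mφ, in terms of φ
  have hmem_m : ∀ I : Set ℕ,
      ((Submodule.span ℂ (mφ '' Iᶜ)).topologicalClosure =
        (Submodule.span ℂ (Set.range mφ)).topologicalClosure) ↔ Tot φ (I ∪ Z)ᶜ := by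
    intro I
    rw [span_smul_image, hTmφ, ← hZdef, hdiff I]
    exact Iff.rfl
  apply le_antisymm
  · -- excess φ ≤ excess mφ
    apply sSup_le
    rintro c ⟨I, hIc, hI⟩
    have hPI : Tot φ Iᶜ := by unfold Tot; rw [hI, hTφ]
    by_cases hZf : Z.Finite
    · by_cases hIf : I.Finite
      · obtain ⟨I', hI'f, hI'Z, hcard, hPIZ⟩ := key φ hZf I hIf hPI hPZc
        have hmem : (I' ∪ Z).encard ∈ {c : ℕ∞ | ∃ I : Set ℕ, I.encard = c ∧
            (Submodule.span ℂ (mφ '' Iᶜ)).topologicalClosure =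
              (Submodule.span ℂ (Set.range mφ)).topologicalClosure} := by
          refine ⟨I' ∪ Z, rfl, (hmem_m (I' ∪ Z)).2 ?_⟩
          have : (I' ∪ Z) ∪ Z = I' ∪ Z := by rw [Set.union_assoc, Set.union_self]
          rw [this]
          exact hPIZ
        have hle : c ≤ (I' ∪ Z).encard := by
          rw [← hIc, Set.encard_union_eq (Set.disjoint_iff_inter_eq_empty.mpr hI'Z)]
          exact hcard
        exact hle.trans (le_sSup hmem)
      · -- I infinite, so c = ⊤; show the sup on the right is ⊤
        have hc : c = ⊤ := by rw [← hIc, Set.encard_eq_top_iff]; exact hIf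
        subst hc
        rw [top_le_iff]
        apply enat_eq_top
        intro n
        obtain ⟨I₀, hI₀I, hI₀c⟩ := Set.exists_subset_encard_eq
          (le_top.trans_eq (Set.encard_eq_top_iff.mpr hIf).symm : (n : ℕ∞) ≤ I.encard)
        have hI₀f : I₀.Finite := Set.finite_of_encard_eq_coe hI₀c
        have hPI₀ : Tot φ I₀ᶜ := hPI.mono (Set.compl_subset_compl.mpr hI₀I)
        obtain ⟨I', hI'f, hI'Z, hcard, hPIZ⟩ := key φ hZf I₀ hI₀f hPI₀ hPZc
        have hmem : (I' ∪ Z).encard ∈ {c : ℕ∞ | ∃ I : Set ℕ, I.encard = c ∧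
            (Submodule.span ℂ (mφ '' Iᶜ)).topologicalClosure =
              (Submodule.span ℂ (Set.range mφ)).topologicalClosure} := by
          refine ⟨I' ∪ Z, rfl, (hmem_m (I' ∪ Z)).2 ?_⟩
          have : (I' ∪ Z) ∪ Z = I' ∪ Z := by rw [Set.union_assoc, Set.union_self]
          rw [this]
          exact hPIZ
        refine le_trans ?_ (le_sSup hmem)
        rw [← hI₀c, Set.encard_union_eq (Set.disjoint_iff_inter_eq_empty.mpr hI'Z)]
        exact hcard
    · -- Z infinite: the right-hand sup is ⊤
      have hmem : (⊤ : ℕ∞) ∈ {c : ℕ∞ | ∃ I : Set ℕ, I.encard = c ∧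
          (Submodule.span ℂ (mφ '' Iᶜ)).topologicalClosure =
            (Submodule.span ℂ (Set.range mφ)).topologicalClosure} := by
        refine ⟨Z, Set.encard_eq_top_iff.mpr hZf, ?_⟩
        congr 1
        rw [span_smul_image, ← hZdef, hrange_m]
        congr 1
        rw [Set.diff_eq, Set.inter_self]
      exact le_top.trans (le_sSup hmem)
  · -- excess mφ ≤ excess φ
    apply sSup_le
    rintro c ⟨I, hIc, hI⟩
    have hP : Tot φ (I ∪ Z)ᶜ := (hmem_m I).1 hI
    have hmem : (I ∪ Z).encard ∈ {c : ℕ∞ | ∃ I : Set ℕ, I.encard = c ∧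
        (Submodule.span ℂ (φ '' Iᶜ)).topologicalClosure =
          (Submodule.span ℂ (Set.range φ)).topologicalClosure} :=
      ⟨I ∪ Z, rfl, by rw [hTφ]; exact hP⟩
    exact le_trans (hIc ▸ Set.encard_mono Set.subset_union_left) (le_sSup hmem)
end

section
/- Let φ, ψ be dual frames for H, m ∈ ℓ^∞ with lim_{n→∞} m_n = l. Each eigenvalue λ ≠ l of M_{m,φ,ψ} is an isolated point of σ(M_{m,φ,ψ}) and has finite-dimensional eigenspace. -/
open scoped InnerProductSpace
open Filter

section AuxCompact
open Metric Finset
set_option linter.unusedSectionVars false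
set_option maxHeartbeats 1000000

variable {H : Type*} [NormedAddCommGroup H] [InnerProductSpace ℂ H] [CompleteSpace H]

lemma aux_rankOne_compact (x y : H) : IsCompactOperator (fun f : H => ⟪x, f⟫_ℂ • y) := by
  refine ⟨(fun c : ℂ => c • y) '' Metric.closedBall 0 ‖x‖,
    (isCompact_closedBall _ _).image (by continuity), ?_⟩
  refine Filter.mem_of_superset (Metric.ball_mem_nhds 0 one_pos) ?_
  intro f hf
  refine ⟨⟪x, f⟫_ℂ, ?_, rfl⟩
  simp only [Metric.mem_closedBall, dist_zero_right]
  calc ‖⟪x, f⟫_ℂ‖ ≤ ‖x‖ * ‖f‖ := norm_inner_le_norm _ _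
  _ ≤ ‖x‖ * 1 := by nlinarith [norm_nonneg x, (mem_ball_zero_iff.mp hf).le]
  _ = ‖x‖ := mul_one _

lemma aux_sum_compact (s : Finset ℕ) (g : ℕ → (H →L[ℂ] H))
    (hg : ∀ n ∈ s, IsCompactOperator ⇑(g n)) : IsCompactOperator ⇑(∑ n ∈ s, g n) := by
  classical
  induction s using Finset.induction_on with
  | empty => simpa using (isCompactOperator_zero : IsCompactOperator (0 : H → H))
  | @insert a t hna ih =>
    rw [Finset.sum_insert hna]
    have h1 : IsCompactOperator ⇑(g a) := hg a (Finset.mem_insert_self a t)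
    have h2 : IsCompactOperator ⇑(∑ n ∈ t, g n) := ih fun n hn => hg n (Finset.mem_insert_of_mem hn)
    have h3 := h1.add h2
    rwa [show ⇑(g a + ∑ x ∈ t, g x) = ⇑(g a) + ⇑(∑ x ∈ t, g x) from by ext z; simp]


lemma aux_est {φ ψ : ℕ → H} {Bφ Bψ : ℝ} (hBφ : 0 ≤ Bφ) (hBψ : 0 ≤ Bψ)
    (hφ : ∀ (f : H) (s : Finset ℕ), ∑ n ∈ s, ‖⟪φ n, f⟫_ℂ‖ ^ 2 ≤ Bφ * ‖f‖ ^ 2)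
    (hψ : ∀ (f : H) (s : Finset ℕ), ∑ n ∈ s, ‖⟪ψ n, f⟫_ℂ‖ ^ 2 ≤ Bψ * ‖f‖ ^ 2)
    {c : ℕ → ℂ} {ε : ℝ} (hc : ∀ n, ‖c n‖ ≤ ε)
    (f : H) {S : H} (hS : HasSum (fun n => c n • ⟪ψ n, f⟫_ℂ • φ n) S) :
    ‖S‖ ≤ ε * (Real.sqrt Bψ * Real.sqrt Bφ) * ‖f‖ := by
  have hε : 0 ≤ ε := le_trans (norm_nonneg _) (hc 0)
  -- inner with S
  have h2 : HasSum (fun n => c n * (⟪ψ n, f⟫_ℂ * ⟪S, φ n⟫_ℂ)) ⟪S, S⟫_ℂ := by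
    have := (innerSL ℂ S).hasSum hS
    simpa [inner_smul_right, mul_comm, mul_assoc, mul_left_comm] using this
  -- bound every partial sum
  have hpart : ∀ s : Finset ℕ, ‖∑ n ∈ s, c n * (⟪ψ n, f⟫_ℂ * ⟪S, φ n⟫_ℂ)‖
      ≤ ε * (Real.sqrt Bψ * Real.sqrt Bφ) * (‖f‖ * ‖S‖) := by
    intro s
    have h3 : ‖∑ n ∈ s, c n * (⟪ψ n, f⟫_ℂ * ⟪S, φ n⟫_ℂ)‖
        ≤ ∑ n ∈ s, ε * (‖⟪ψ n, f⟫_ℂ‖ * ‖⟪S, φ n⟫_ℂ‖) := by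
      refine le_trans (norm_sum_le _ _) (Finset.sum_le_sum fun n _ => ?_)
      rw [norm_mul, norm_mul]
      gcongr
      exact hc n
    have hCS : (∑ n ∈ s, ‖⟪ψ n, f⟫_ℂ‖ * ‖⟪S, φ n⟫_ℂ‖) ^ 2
        ≤ (∑ n ∈ s, ‖⟪ψ n, f⟫_ℂ‖ ^ 2) * ∑ n ∈ s, ‖⟪S, φ n⟫_ℂ‖ ^ 2 :=
      sum_mul_sq_le_sq_mul_sq s _ _
    have hb1 : ∑ n ∈ s, ‖⟪ψ n, f⟫_ℂ‖ ^ 2 ≤ Bψ * ‖f‖ ^ 2 := hψ f s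
    have hb2 : ∑ n ∈ s, ‖⟪S, φ n⟫_ℂ‖ ^ 2 ≤ Bφ * ‖S‖ ^ 2 := by
      have := hφ S s
      simpa [norm_inner_symm S] using this
    have hnn1 : (0:ℝ) ≤ ∑ n ∈ s, ‖⟪ψ n, f⟫_ℂ‖ * ‖⟪S, φ n⟫_ℂ‖ :=
      Finset.sum_nonneg fun n _ => by positivity
    have key : ∑ n ∈ s, ‖⟪ψ n, f⟫_ℂ‖ * ‖⟪S, φ n⟫_ℂ‖
        ≤ Real.sqrt Bψ * Real.sqrt Bφ * (‖f‖ * ‖S‖) := by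
      have h4 : (∑ n ∈ s, ‖⟪ψ n, f⟫_ℂ‖ * ‖⟪S, φ n⟫_ℂ‖) ^ 2
          ≤ (Bψ * ‖f‖ ^ 2) * (Bφ * ‖S‖ ^ 2) := by
        refine le_trans hCS ?_
        have nn : (0:ℝ) ≤ ∑ n ∈ s, ‖⟪ψ n, f⟫_ℂ‖ ^ 2 := Finset.sum_nonneg fun n _ => by positivity
        have nn2 : (0:ℝ) ≤ ∑ n ∈ s, ‖⟪S, φ n⟫_ℂ‖ ^ 2 := Finset.sum_nonneg fun n _ => by positivity
        exact mul_le_mul hb1 hb2 nn2 (by positivity)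
      have h5 : Real.sqrt ((∑ n ∈ s, ‖⟪ψ n, f⟫_ℂ‖ * ‖⟪S, φ n⟫_ℂ‖) ^ 2)
          ≤ Real.sqrt ((Bψ * ‖f‖ ^ 2) * (Bφ * ‖S‖ ^ 2)) := Real.sqrt_le_sqrt h4
      rw [Real.sqrt_sq hnn1] at h5
      refine le_trans h5 (le_of_eq ?_)
      rw [Real.sqrt_mul (by positivity), Real.sqrt_mul hBψ, Real.sqrt_mul hBφ,
        Real.sqrt_sq (norm_nonneg f), Real.sqrt_sq (norm_nonneg S)]
      ring
    calc ‖∑ n ∈ s, c n * (⟪ψ n, f⟫_ℂ * ⟪S, φ n⟫_ℂ)‖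
        ≤ ∑ n ∈ s, ε * (‖⟪ψ n, f⟫_ℂ‖ * ‖⟪S, φ n⟫_ℂ‖) := h3
      _ = ε * ∑ n ∈ s, ‖⟪ψ n, f⟫_ℂ‖ * ‖⟪S, φ n⟫_ℂ‖ := by rw [Finset.mul_sum]
      _ ≤ ε * (Real.sqrt Bψ * Real.sqrt Bφ * (‖f‖ * ‖S‖)) := by
          exact mul_le_mul_of_nonneg_left key hε
      _ = ε * (Real.sqrt Bψ * Real.sqrt Bφ) * (‖f‖ * ‖S‖) := by ring
  -- pass to the limit
  have hlim : ‖⟪S, S⟫_ℂ‖ ≤ ε * (Real.sqrt Bψ * Real.sqrt Bφ) * (‖f‖ * ‖S‖) := by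
    have hT : Tendsto (fun s : Finset ℕ => ‖∑ n ∈ s, c n * (⟪ψ n, f⟫_ℂ * ⟪S, φ n⟫_ℂ)‖)
        atTop (nhds ‖⟪S, S⟫_ℂ‖) := Filter.Tendsto.norm h2
    exact le_of_tendsto hT (Filter.Eventually.of_forall hpart)
  have hSS : ‖⟪S, S⟫_ℂ‖ = ‖S‖ ^ 2 := by
    rw [inner_self_eq_norm_sq_to_K, norm_pow]; norm_num
  rw [hSS] at hlim
  rcases eq_or_lt_of_le (norm_nonneg S) with h0 | h0
  · rw [← h0]; positivity
  · have : ‖S‖ * ‖S‖ ≤ (ε * (Real.sqrt Bψ * Real.sqrt Bφ) * ‖f‖) * ‖S‖ := by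
      have := hlim; nlinarith [this]
    exact le_of_mul_le_mul_right this h0


lemma aux_smul_rankOne_compact (a : ℂ) (x y : H) :
    IsCompactOperator ⇑(a • (innerSL ℂ x).smulRight y) := by
  have h := (aux_rankOne_compact x y).smul a
  have he : ⇑(a • (innerSL ℂ x).smulRight y) = a • (fun f : H => ⟪x, f⟫_ℂ • y) := by
    ext f; simp
  rwa [he]


lemma aux_adjoint_rankOne (x y : H) :
    ContinuousLinearMap.adjoint ((innerSL ℂ x).smulRight y) = (innerSL ℂ y).smulRight x := by
  symm
  rw [ContinuousLinearMap.eq_adjoint_iff]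
  intro a b
  simp only [ContinuousLinearMap.smulRight_apply, innerSL_apply_apply,
    inner_smul_left, inner_smul_right, inner_conj_symm]
  ring


lemma aux_compact_both {φ ψ : ℕ → H} {Bφ Bψ : ℝ} (hBφ : 0 ≤ Bφ) (hBψ : 0 ≤ Bψ)
    (hφ : ∀ (f : H) (s : Finset ℕ), ∑ n ∈ s, ‖⟪φ n, f⟫_ℂ‖ ^ 2 ≤ Bφ * ‖f‖ ^ 2)
    (hψ : ∀ (f : H) (s : Finset ℕ), ∑ n ∈ s, ‖⟪ψ n, f⟫_ℂ‖ ^ 2 ≤ Bψ * ‖f‖ ^ 2)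
    {c : ℕ → ℂ} (hc0 : Tendsto c atTop (nhds 0))
    (K : H →L[ℂ] H) (hK : ∀ f, HasSum (fun n => c n • ⟪ψ n, f⟫_ℂ • φ n) (K f)) :
    IsCompactOperator ⇑K ∧ IsCompactOperator ⇑(ContinuousLinearMap.adjoint K) := by
  classical
  set T : ℕ → H →L[ℂ] H :=
    fun N => ∑ n ∈ Finset.range N, c n • (innerSL ℂ (ψ n)).smulRight (φ n) with hT
  have hTapp : ∀ N f, T N f = ∑ n ∈ Finset.range N, c n • ⟪ψ n, f⟫_ℂ • φ n := by
    intro N f; simp [hT, ContinuousLinearMap.sum_apply]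
  -- difference estimate
  have hdiff : ∀ (N : ℕ) (ε : ℝ), 0 ≤ ε → (∀ n, N ≤ n → ‖c n‖ ≤ ε) →
      ‖K - T N‖ ≤ ε * (Real.sqrt Bψ * Real.sqrt Bφ) := by
    intro N ε hε hN
    refine ContinuousLinearMap.opNorm_le_bound _ (by positivity) fun f => ?_
    have heq : ∑ n ∈ Finset.range N, (if n ∈ Finset.range N then c n else 0) • ⟪ψ n, f⟫_ℂ • φ n
        = T N f := by
      rw [hTapp]
      exact Finset.sum_congr rfl fun n hn => by rw [if_pos hn]
    have h1 : HasSum (fun n => (if n ∈ Finset.range N then c n else 0) • ⟪ψ n, f⟫_ℂ • φ n)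
        (T N f) := by
      rw [← heq]
      exact hasSum_sum_of_ne_finset_zero (by intro b hb; simp [hb])
    have h2 : HasSum (fun n => (if n ∈ Finset.range N then 0 else c n) • ⟪ψ n, f⟫_ℂ • φ n)
        ((K - T N) f) := by
      have h3 := (hK f).sub h1
      have h4 : (fun n => c n • ⟪ψ n, f⟫_ℂ • φ n
          - (if n ∈ Finset.range N then c n else 0) • ⟪ψ n, f⟫_ℂ • φ n)
          = fun n => (if n ∈ Finset.range N then 0 else c n) • ⟪ψ n, f⟫_ℂ • φ n := by
        funext n
        by_cases h : n ∈ Finset.range N <;> simp [h]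
      rw [h4] at h3
      simpa using h3
    have hcc : ∀ n, ‖(if n ∈ Finset.range N then 0 else c n)‖ ≤ ε := by
      intro n
      by_cases h : n ∈ Finset.range N
      · simp [h, hε]
      · simp only [h, if_false]
        exact hN n (by simpa using h)
    exact aux_est hBφ hBψ hφ hψ hcc f h2
  -- convergence in operator norm
  have hTK : Tendsto T atTop (nhds K) := by
    rw [Metric.tendsto_atTop]
    intro ε hε
    set C := Real.sqrt Bψ * Real.sqrt Bφ with hC
    have hC0 : 0 ≤ C := by positivity
    set δ := ε / (2 * (C + 1)) with hδ
    have hδ0 : 0 < δ := by positivity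
    obtain ⟨N₀, hN₀⟩ := (Metric.tendsto_atTop.mp hc0) δ hδ0
    refine ⟨N₀, fun N hN => ?_⟩
    have hb : ∀ n, N ≤ n → ‖c n‖ ≤ δ := fun n hn => by
      have := hN₀ n (le_trans hN hn)
      rw [dist_zero_right] at this
      exact this.le
    have := hdiff N δ hδ0.le hb
    rw [dist_eq_norm, ← norm_neg]
    simp only [neg_sub]
    calc ‖K - T N‖ ≤ δ * C := this
    _ < ε := by
        rw [hδ, div_mul_eq_mul_div, div_lt_iff₀ (by positivity)]
        nlinarith [hC0, hε]
  -- compactness of the approximants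
  have hTcomp : ∀ N, IsCompactOperator ⇑(T N) := fun N =>
    aux_sum_compact _ _ fun n _ => aux_smul_rankOne_compact (c n) (ψ n) (φ n)
  have hKcomp : IsCompactOperator ⇑K :=
    isCompactOperator_of_tendsto hTK (Filter.Eventually.of_forall hTcomp)
  -- adjoints
  have hTadj : ∀ N, ContinuousLinearMap.adjoint (T N)
      = ∑ n ∈ Finset.range N, (starRingEnd ℂ) (c n) • (innerSL ℂ (φ n)).smulRight (ψ n) := by
    intro N
    rw [hT, map_sum]
    refine Finset.sum_congr rfl fun n _ => ?_
    rw [LinearIsometryEquiv.map_smulₛₗ, aux_adjoint_rankOne]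
  have hadjT : Tendsto (fun N => ContinuousLinearMap.adjoint (T N)) atTop
      (nhds (ContinuousLinearMap.adjoint K)) :=
    ((ContinuousLinearMap.adjoint (𝕜 := ℂ) (E := H) (F := H)).continuous.continuousAt.tendsto).comp hTK
  have hadjcomp : ∀ N, IsCompactOperator ⇑(ContinuousLinearMap.adjoint (T N)) := by
    intro N
    rw [hTadj N]
    exact aux_sum_compact _ _ fun n _ => aux_smul_rankOne_compact _ (φ n) (ψ n)
  exact ⟨hKcomp, isCompactOperator_of_tendsto hadjT (Filter.Eventually.of_forall hadjcomp)⟩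


lemma aux_eig_sep (T : H →L[ℂ] H) (hT : IsCompactOperator ⇑T) {cst : ℝ} (hcst : 0 < cst)
    (μ : ℕ → ℂ) (hinj : Function.Injective μ) (hnorm : ∀ j, cst ≤ ‖μ j‖)
    (hev : ∀ j, ∃ u : H, u ≠ 0 ∧ T u = μ j • u) : False := by
  classical
  choose v hv0 hvT using hev
  -- linear independence of the eigenvectors
  have li : LinearIndependent ℂ v := by
    have h := Module.End.eigenvectors_linearIndependent (T : H →ₗ[ℂ] H) (Set.range μ)
      (fun z => v ((Equiv.ofInjective μ hinj).symm z)) ?_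
    · have hcomp : v = (fun z => v ((Equiv.ofInjective μ hinj).symm z)) ∘ (Equiv.ofInjective μ hinj) := by
        funext j; simp
      rw [hcomp]
      exact h.comp _ (Equiv.ofInjective μ hinj).injective
    · rintro z
      constructor
      · rw [Module.End.mem_eigenspace_iff]
        have hz : (z : ℂ) = μ ((Equiv.ofInjective μ hinj).symm z) :=
          (Equiv.apply_ofInjective_symm hinj z).symm
        rw [hz]
        exact hvT _
      · exact hv0 _
  -- the nested spans
  set E : ℕ → Submodule ℂ H := fun n => Submodule.span ℂ (v '' Set.Iio n) with hE
  have hmono : ∀ {a b : ℕ}, a ≤ b → E a ≤ E b := fun {a b} hab =>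
    Submodule.span_mono (Set.image_mono fun x hx => lt_of_lt_of_le hx hab)
  have hvmem : ∀ {j n : ℕ}, j < n → v j ∈ E n := fun {j n} hj =>
    Submodule.subset_span ⟨j, hj, rfl⟩
  have hvnot : ∀ n, v n ∉ E n := fun n => li.notMem_span_image (by simp)
  have hfd : ∀ n, FiniteDimensional ℂ (E n) := fun n =>
    FiniteDimensional.span_of_finite ℂ ((Set.finite_Iio n).image v)
  have hTmapsto : ∀ n, ∀ x ∈ E n, T x ∈ E n := by
    intro n x hx
    induction hx using Submodule.span_induction with
    | mem x hx =>
      obtain ⟨j, hj, rfl⟩ := hx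
      rw [hvT j]
      exact Submodule.smul_mem _ _ (hvmem hj)
    | zero => simpa using (E n).zero_mem
    | add a b _ _ ha hb => rw [map_add]; exact (E n).add_mem ha hb
    | smul a x _ hx => rw [map_smul]; exact (E n).smul_mem a hx
  -- orthonormal-ish sequence
  haveI : ∀ n, Submodule.HasOrthogonalProjection (E n) := fun n =>
    haveI := hfd n
    haveI : CompleteSpace (E n) := FiniteDimensional.complete ℂ _
    Submodule.HasOrthogonalProjection.ofCompleteSpace _
  set w : ℕ → H := fun n => v n - (Submodule.orthogonalProjection (E n) (v n) : H) with hw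
  have hw0 : ∀ n, w n ≠ 0 := by
    intro n h
    apply hvnot n
    have : v n = (Submodule.orthogonalProjection (E n) (v n) : H) := by
      have := sub_eq_zero.mp h; exact this
    rw [this]; exact Submodule.coe_mem _
  have hworth : ∀ n, w n ∈ (E n)ᗮ := fun n => Submodule.sub_starProjection_mem_orthogonal _
  have hwmem : ∀ n, w n ∈ E (n + 1) := fun n =>
    Submodule.sub_mem _ (hvmem (Nat.lt_succ_self n)) (hmono (Nat.le_succ n) (Submodule.coe_mem _))
  set y : ℕ → H := fun n => (‖w n‖ : ℂ)⁻¹ • w n with hy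
  have hynorm : ∀ n, ‖y n‖ = 1 := by
    intro n
    have hn0 : ‖w n‖ ≠ 0 := norm_ne_zero_iff.mpr (hw0 n)
    rw [hy]
    simp only [norm_smul, norm_inv, Complex.norm_real, norm_norm]
    field_simp
  have hyorth : ∀ n, y n ∈ (E n)ᗮ := fun n => Submodule.smul_mem _ _ (hworth n)
  have hymem : ∀ n, y n ∈ E (n + 1) := fun n => Submodule.smul_mem _ _ (hwmem n)
  -- T y n - μ n y n ∈ E n
  have hz : ∀ n, T (y n) - μ n • y n ∈ E n := by
    intro n
    have h1 : T (w n) - μ n • w n ∈ E n := by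
      have hp : (Submodule.orthogonalProjection (E n) (v n) : H) ∈ E n := Submodule.coe_mem _
      have : T (w n) - μ n • w n
          = -(T ((Submodule.orthogonalProjection (E n) (v n) : H)) - μ n • (Submodule.orthogonalProjection (E n) (v n) : H)) := by
        rw [hw]
        simp only [map_sub, smul_sub]
        rw [hvT n]
        abel
      rw [this]
      exact Submodule.neg_mem _ (Submodule.sub_mem _ (hTmapsto n _ hp) (Submodule.smul_mem _ _ hp))
    have : T (y n) - μ n • y n = (‖w n‖ : ℂ)⁻¹ • (T (w n) - μ n • w n) := by
      rw [hy]
      simp only [map_smul, smul_sub, smul_comm ((‖w n‖ : ℂ)⁻¹) (μ n)]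
    rw [this]
    exact Submodule.smul_mem _ _ h1
  -- separation of the images
  have hsep : ∀ {a b : ℕ}, a < b → cst ≤ ‖T (y b) - T (y a)‖ := by
    intro a b hab
    have hmem : T (y b) - μ b • y b - T (y a) ∈ E b := by
      refine Submodule.sub_mem _ (hz b) ?_
      exact hTmapsto b _ (hmono (Nat.succ_le_of_lt hab) (hymem a))
    have hdecomp : T (y b) - T (y a) = μ b • y b + (T (y b) - μ b • y b - T (y a)) := by abel
    have hinner : ⟪μ b • y b, T (y b) - μ b • y b - T (y a)⟫_ℂ = 0 := by
      rw [inner_smul_left]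
      rw [Submodule.inner_left_of_mem_orthogonal hmem (hyorth b), mul_zero]
    have hpyth := norm_add_sq_eq_norm_sq_add_norm_sq_of_inner_eq_zero _ _ hinner
    rw [← hdecomp] at hpyth
    have h1 : ‖μ b • y b‖ = ‖μ b‖ := by rw [norm_smul, hynorm b, mul_one]
    nlinarith [hnorm b, norm_nonneg (T (y b) - μ b • y b - T (y a)),
      norm_nonneg (T (y b) - T (y a)), hcst]
  -- contradiction with total boundedness
  obtain ⟨C, hC, hCsub⟩ := hT.image_closedBall_subset_compact (f := (T : H →ₗ[ℂ] H)) 1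
  have hmemC : ∀ n, T (y n) ∈ C := by
    intro n
    apply hCsub
    exact ⟨y n, by simp [Metric.mem_closedBall, dist_zero_right, (hynorm n).le], rfl⟩
  obtain ⟨t, htfin, htsub⟩ := (Metric.totallyBounded_iff.mp hC.totallyBounded) (cst / 2)
    (by positivity)
  have hcenter : ∀ n, ∃ z ∈ t, T (y n) ∈ Metric.ball z (cst / 2) := by
    intro n
    have := htsub (hmemC n)
    simpa using this
  choose g hg hgball using hcenter
  haveI : Finite t := htfin
  obtain ⟨a, b, hab, heq⟩ := Finite.exists_ne_map_eq_of_infinite (fun n => (⟨g n, hg n⟩ : t))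
  have hgg : g a = g b := congrArg Subtype.val heq
  have hd : dist (T (y a)) (T (y b)) < cst := by
    have h1 := Metric.mem_ball.mp (hgball a)
    have h2 := Metric.mem_ball.mp (hgball b)
    calc dist (T (y a)) (T (y b)) ≤ dist (T (y a)) (g a) + dist (g a) (T (y b)) :=
        dist_triangle _ _ _
    _ = dist (T (y a)) (g a) + dist (T (y b)) (g b) := by rw [hgg, dist_comm (g b) (T (y b))]
    _ < cst / 2 + cst / 2 := by exact add_lt_add h1 h2
    _ = cst := by ring
  rcases lt_or_gt_of_ne hab with h | h
  · have := hsep h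
    rw [dist_comm, dist_eq_norm] at hd
    exact absurd hd (not_lt.mpr this)
  · have := hsep h
    rw [dist_eq_norm] at hd
    exact absurd hd (not_lt.mpr this)


lemma aux_approx_eig (T : H →L[ℂ] H) (hT : IsCompactOperator ⇑T) {μ : ℂ} (hμ : μ ≠ 0)
    (h : ∀ δ : ℝ, 0 < δ → ∃ x : H, ‖x‖ = 1 ∧ ‖T x - μ • x‖ < δ) :
    ∃ x : H, x ≠ 0 ∧ T x = μ • x := by
  choose x hx1 hx2 using fun j : ℕ => h (1 / (j + 1)) (by positivity)
  obtain ⟨C, hC, hCsub⟩ := hT.image_closedBall_subset_compact (f := (T : H →ₗ[ℂ] H)) 1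
  have hmem : ∀ j, T (x j) ∈ C := fun j =>
    hCsub ⟨x j, by simp [Metric.mem_closedBall, dist_zero_right, (hx1 j).le], rfl⟩
  obtain ⟨y, hyC, φs, hφmono, hconv⟩ := hC.isSeqCompact (x := fun j => T (x j)) hmem
  have herr : Tendsto (fun j => T (x j) - μ • x j) atTop (nhds 0) := by
    apply squeeze_zero_norm (fun j => (hx2 j).le)
    exact tendsto_one_div_add_atTop_nhds_zero_nat
  have herr2 : Tendsto (fun j => T (x (φs j)) - μ • x (φs j)) atTop (nhds 0) :=
    herr.comp hφmono.tendsto_atTop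
  have hμx : Tendsto (fun j => μ • x (φs j)) atTop (nhds y) := by
    have := hconv.sub herr2
    simpa using this
  have hxconv : Tendsto (fun j => x (φs j)) atTop (nhds (μ⁻¹ • y)) := by
    have := hμx.const_smul (μ⁻¹)
    simpa [smul_smul, inv_mul_cancel₀ hμ] using this
  refine ⟨μ⁻¹ • y, ?_, ?_⟩
  · have hnorm : Tendsto (fun j => ‖x (φs j)‖) atTop (nhds ‖μ⁻¹ • y‖) := hxconv.norm
    have hnorm1 : Tendsto (fun j => ‖x (φs j)‖) atTop (nhds 1) := by
      simp only [hx1]; exact tendsto_const_nhds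
    have : ‖μ⁻¹ • y‖ = 1 := tendsto_nhds_unique hnorm hnorm1
    intro h0
    rw [h0] at this
    simp at this
  · have hTconv : Tendsto (fun j => T (x (φs j))) atTop (nhds (T (μ⁻¹ • y))) :=
      (T.continuous.tendsto _).comp hxconv
    have : T (μ⁻¹ • y) = y := tendsto_nhds_unique hTconv hconv
    rw [this, smul_smul, mul_inv_cancel₀ hμ, one_smul]

lemma aux_spec_cases (T : H →L[ℂ] H) (hT : IsCompactOperator ⇑T) {μ : ℂ} (hμ0 : μ ≠ 0)
    (hμ : μ ∈ spectrum ℂ T) :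
    (∃ x : H, x ≠ 0 ∧ T x = μ • x) ∨
    (∃ x : H, x ≠ 0 ∧ ContinuousLinearMap.adjoint T x = (starRingEnd ℂ) μ • x) := by
  set S : H →L[ℂ] H := algebraMap ℂ (H →L[ℂ] H) μ - T with hS
  have hSx : ∀ x, S x = μ • x - T x := by
    intro x; simp [hS, Algebra.algebraMap_eq_smul_one]
  have hnotunit : ¬ IsUnit S := by rwa [spectrum.mem_iff] at hμ
  by_cases hbb : ∃ c : ℝ, 0 < c ∧ ∀ x, c * ‖x‖ ≤ ‖S x‖
  · -- `S` bounded below: range is closed and proper, adjoint has eigenvector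
    obtain ⟨c, hc, hcb⟩ := hbb
    right
    have hanti : AntilipschitzWith (⟨c, hc.le⟩ : NNReal)⁻¹ ⇑S := by
      apply AddMonoidHomClass.antilipschitz_of_bound
      intro x
      have := hcb x
      show ‖x‖ ≤ c⁻¹ * ‖S x‖
      rw [← div_eq_inv_mul, le_div_iff₀ hc]
      linarith [this]
    have hclosed : IsClosed (Set.range ⇑S) := hanti.isClosed_range S.uniformContinuous
    set R : Submodule ℂ H := LinearMap.range (S : H →ₗ[ℂ] H) with hR
    have hRset : (R : Set H) = Set.range ⇑S := by
      rw [hR]; rfl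
    have hRne : R ≠ ⊤ := by
      intro htop
      apply hnotunit
      rw [ContinuousLinearMap.isUnit_iff_bijective]
      exact ⟨hanti.injective, LinearMap.range_eq_top.mp htop⟩
    haveI : CompleteSpace R :=
      (hRset ▸ hclosed : IsClosed (R : Set H)).completeSpace_coe
    have hbot : Rᗮ ≠ ⊥ := by
      intro hbot
      exact hRne (Submodule.orthogonal_eq_bot_iff.mp hbot)
    obtain ⟨g, hgR, hg0⟩ := Submodule.exists_mem_ne_zero_of_ne_bot hbot
    refine ⟨g, hg0, ?_⟩
    have hadj : ContinuousLinearMap.adjoint S g = 0 := by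
      apply ext_inner_left ℂ
      intro x
      rw [ContinuousLinearMap.adjoint_inner_right]
      rw [inner_zero_right]
      exact Submodule.inner_right_of_mem_orthogonal (LinearMap.mem_range_self _ x) hgR
    have halg : ContinuousLinearMap.adjoint (algebraMap ℂ (H →L[ℂ] H) μ)
        = algebraMap ℂ (H →L[ℂ] H) ((starRingEnd ℂ) μ) := by
      symm
      rw [ContinuousLinearMap.eq_adjoint_iff]
      intro a b
      simp [Algebra.algebraMap_eq_smul_one, inner_smul_left, inner_smul_right]
    have hadjS : ContinuousLinearMap.adjoint S g
        = (starRingEnd ℂ) μ • g - ContinuousLinearMap.adjoint T g := by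
      rw [hS, map_sub, halg]
      simp [Algebra.algebraMap_eq_smul_one]
    rw [hadjS] at hadj
    rw [eq_comm, ← sub_eq_zero]
    rw [← hadj]
  · -- approximate eigenvalue
    left
    push_neg at hbb
    apply aux_approx_eig T hT hμ0
    intro δ hδ
    obtain ⟨x, hx⟩ := hbb δ hδ
    have hx0 : x ≠ 0 := by
      intro h0
      rw [h0] at hx
      simpa using hx
    set u : H := (‖x‖ : ℂ)⁻¹ • x with hu
    have hxn : ‖x‖ ≠ 0 := norm_ne_zero_iff.mpr hx0
    refine ⟨u, ?_, ?_⟩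
    · rw [hu, norm_smul]
      simp only [norm_inv, Complex.norm_real, norm_norm]
      field_simp
    · have hSu : S u = (‖x‖ : ℂ)⁻¹ • S x := by rw [hu, map_smul]
      have : T u - μ • u = -S u := by rw [hSx]; abel
      rw [this, norm_neg, hSu, norm_smul]
      simp only [norm_inv, Complex.norm_real, norm_norm]
      rw [inv_mul_lt_iff₀ (by positivity)]
      linarith [hx]


lemma aux_findim (T : H →L[ℂ] H) (hT : IsCompactOperator ⇑T) {μ : ℂ} (hμ : μ ≠ 0) :
    FiniteDimensional ℂ (Module.End.eigenspace (T : H →ₗ[ℂ] H) μ) := by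
  set E := Module.End.eigenspace (T : H →ₗ[ℂ] H) μ with hE
  have hEmem : ∀ x : H, x ∈ E ↔ T x = μ • x := by
    intro x
    rw [hE, Module.End.mem_eigenspace_iff]
    rfl
  have hclosed : IsClosed (E : Set H) := by
    have hset : (E : Set H) = {x : H | T x = μ • x} := by
      ext x; exact hEmem x
    rw [hset]
    exact isClosed_eq T.continuous (continuous_const_smul μ)
  obtain ⟨C, hC, hCsub⟩ := hT.image_closedBall_subset_compact (f := (T : H →ₗ[ℂ] H)) 1
  have hC' : IsCompact ((fun y : H => μ⁻¹ • y) '' C) := hC.image (continuous_const_smul _)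
  have hsub : (E : Set H) ∩ Metric.closedBall 0 1 ⊆ (fun y : H => μ⁻¹ • y) '' C := by
    rintro x ⟨hxE, hxb⟩
    refine ⟨T x, hCsub ⟨x, hxb, rfl⟩, ?_⟩
    show μ⁻¹ • T x = x
    rw [(hEmem x).mp hxE, smul_smul, inv_mul_cancel₀ hμ, one_smul]
  have hcompact : IsCompact ((E : Set H) ∩ Metric.closedBall 0 1) :=
    hC'.of_isClosed_subset (hclosed.inter Metric.isClosed_closedBall) hsub
  have hball : IsCompact (Metric.closedBall (0 : E) 1) := by
    have hemb : Topology.IsEmbedding ((↑) : E → H) := Topology.IsEmbedding.subtypeVal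
    rw [hemb.isCompact_iff]
    have himg : (↑) '' (Metric.closedBall (0 : E) 1) = (E : Set H) ∩ Metric.closedBall 0 1 := by
      ext x
      constructor
      · rintro ⟨z, hz, rfl⟩
        refine ⟨z.2, ?_⟩
        rw [Metric.mem_closedBall, dist_zero_right] at hz ⊢
        exact hz
      · rintro ⟨hx1, hx2⟩
        refine ⟨⟨x, hx1⟩, ?_, rfl⟩
        rw [Metric.mem_closedBall, dist_zero_right] at hx2 ⊢
        exact hx2
    rw [himg]
    exact hcompact
  exact FiniteDimensional.of_isCompact_closedBall₀ ℂ one_pos hball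

end AuxCompact

open Metric Finset in
set_option maxHeartbeats 1000000 in
/-- For dual frames and symbol converging to `l`, every eigenvalue `λ ≠ l` of
`M_{m,φ,ψ}` is isolated in the spectrum and has finite-dimensional eigenspace. -/
theorem stmt11 {H : Type*} [NormedAddCommGroup H] [InnerProductSpace ℂ H] [CompleteSpace H]
    (hinfdim : ¬ FiniteDimensional ℂ H)
    (φ ψ : ℕ → H)
    (hdual : (∃ A B : ℝ, 0 < A ∧ 0 < B ∧ ∀ f : H,
        Summable (fun n => ‖⟪φ n, f⟫_ℂ‖ ^ 2) ∧
        A * ‖f‖ ^ 2 ≤ ∑' n, ‖⟪φ n, f⟫_ℂ‖ ^ 2 ∧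
        ∑' n, ‖⟪φ n, f⟫_ℂ‖ ^ 2 ≤ B * ‖f‖ ^ 2) ∧
      (∃ A B : ℝ, 0 < A ∧ 0 < B ∧ ∀ f : H,
        Summable (fun n => ‖⟪ψ n, f⟫_ℂ‖ ^ 2) ∧
        A * ‖f‖ ^ 2 ≤ ∑' n, ‖⟪ψ n, f⟫_ℂ‖ ^ 2 ∧
        ∑' n, ‖⟪ψ n, f⟫_ℂ‖ ^ 2 ≤ B * ‖f‖ ^ 2) ∧
      ∀ f : H, HasSum (fun n => ⟪ψ n, f⟫_ℂ • φ n) f)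
    (m : ℕ → ℂ) (hm : ∃ C : ℝ, ∀ n, ‖m n‖ ≤ C)
    (l : ℂ) (hl : Tendsto m atTop (nhds l))
    (M : H →L[ℂ] H)
    (hM : ∀ f : H, HasSum (fun n => m n • ⟪ψ n, f⟫_ℂ • φ n) (M f))
    (lam : ℂ) (hlam : lam ≠ l)
    (heig : Module.End.HasEigenvalue (M : H →ₗ[ℂ] H) lam) :
    (∃ U : Set ℂ, IsOpen U ∧ lam ∈ U ∧ U ∩ spectrum ℂ M = {lam}) ∧
      FiniteDimensional ℂ (Module.End.eigenspace (M : H →ₗ[ℂ] H) lam) := by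
  classical
  obtain ⟨⟨Aφ, Bφ, hAφ, hBφ, hφ⟩, ⟨Aψ, Bψ, hAψ, hBψ, hψ⟩, hsum⟩ := hdual
  -- finset-level frame bounds
  have hφs : ∀ (f : H) (s : Finset ℕ), ∑ n ∈ s, ‖⟪φ n, f⟫_ℂ‖ ^ 2 ≤ Bφ * ‖f‖ ^ 2 := by
    intro f s
    exact le_trans (Summable.sum_le_tsum s (fun n _ => by positivity) (hφ f).1) (hφ f).2.2
  have hψs : ∀ (f : H) (s : Finset ℕ), ∑ n ∈ s, ‖⟪ψ n, f⟫_ℂ‖ ^ 2 ≤ Bψ * ‖f‖ ^ 2 := by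
    intro f s
    exact le_trans (Summable.sum_le_tsum s (fun n _ => by positivity) (hψ f).1) (hψ f).2.2
  -- the shifted operator
  set c : ℕ → ℂ := fun n => m n - l with hc
  have hc0 : Tendsto c atTop (nhds 0) := by
    have := hl.sub (tendsto_const_nhds (x := l))
    simpa using this
  set K : H →L[ℂ] H := M - algebraMap ℂ (H →L[ℂ] H) l with hKdef
  have hKapp : ∀ f : H, K f = M f - l • f := by
    intro f
    simp [hKdef, Algebra.algebraMap_eq_smul_one]
  have hK : ∀ f : H, HasSum (fun n => c n • ⟪ψ n, f⟫_ℂ • φ n) (K f) := by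
    intro f
    have h1 : HasSum (fun n => l • ⟪ψ n, f⟫_ℂ • φ n) (l • f) := (hsum f).const_smul l
    have h2 := (hM f).sub h1
    rw [← hKapp] at h2
    have heq : (fun n => m n • ⟪ψ n, f⟫_ℂ • φ n - l • ⟪ψ n, f⟫_ℂ • φ n)
        = fun n => c n • ⟪ψ n, f⟫_ℂ • φ n := by
      funext n
      rw [hc, ← sub_smul]
    rwa [heq] at h2
  obtain ⟨hKc, hKadj⟩ := aux_compact_both hBφ.le hBψ.le hφs hψs hc0 K hK
  -- spectrum relation
  have hspec : ∀ μ : ℂ, μ ∈ spectrum ℂ M ↔ (μ - l) ∈ spectrum ℂ K := by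
    intro μ
    rw [spectrum.mem_iff, spectrum.mem_iff]
    have : algebraMap ℂ (H →L[ℂ] H) (μ - l) - K = algebraMap ℂ (H →L[ℂ] H) μ - M := by
      rw [map_sub, hKdef]
      abel
    rw [this]
  -- lam is in the spectrum
  obtain ⟨v, hvmem, hv0⟩ := heig.exists_hasEigenvector
  have hveq : M v = lam • v := Module.End.mem_eigenspace_iff.mp hvmem
  have hlamspec : lam ∈ spectrum ℂ M := by
    rw [spectrum.mem_iff]
    intro hunit
    have hbij := ContinuousLinearMap.isUnit_iff_bijective.mp hunit
    apply hv0
    apply hbij.injective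
    have h1 : (algebraMap ℂ (H →L[ℂ] H) lam - M) v = 0 := by
      simp [Algebra.algebraMap_eq_smul_one, hveq]
    rw [h1, map_zero]
  -- part 2
  have hμ0 : lam - l ≠ 0 := sub_ne_zero.mpr hlam
  have hfd : FiniteDimensional ℂ (Module.End.eigenspace (M : H →ₗ[ℂ] H) lam) := by
    have hEq : Module.End.eigenspace (M : H →ₗ[ℂ] H) lam
        = Module.End.eigenspace (K : H →ₗ[ℂ] H) (lam - l) := by
      ext x
      rw [Module.End.mem_eigenspace_iff, Module.End.mem_eigenspace_iff]
      show M x = lam • x ↔ K x = (lam - l) • x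
      rw [hKapp, sub_smul, sub_left_inj]
    rw [hEq]
    exact aux_findim K hKc hμ0
  refine ⟨?_, hfd⟩
  -- part 1: isolation
  by_contra hno
  set c0 : ℝ := ‖lam - l‖ / 2 with hc0def
  have hc0pos : 0 < c0 := by
    rw [hc0def]
    have : 0 < ‖lam - l‖ := norm_pos_iff.mpr hμ0
    linarith
  have step : ∀ r : ℝ, 0 < r →
      ∃ z : ℂ, z ∈ spectrum ℂ M ∧ z ≠ lam ∧ dist z lam < r := by
    intro r hr
    set U : Set ℂ := Metric.ball lam r with hU
    have hne : U ∩ spectrum ℂ M ≠ {lam} := fun h =>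
      hno ⟨U, Metric.isOpen_ball, Metric.mem_ball_self hr, h⟩
    have hsup : ({lam} : Set ℂ) ⊆ U ∩ spectrum ℂ M := by
      rintro z rfl
      exact ⟨Metric.mem_ball_self hr, hlamspec⟩
    by_contra hcon
    push_neg at hcon
    apply hne
    apply Set.Subset.antisymm _ hsup
    rintro z ⟨hz1, hz2⟩
    by_contra hz3
    have hzne : z ≠ lam := fun h => hz3 (by simp [h])
    exact absurd (Metric.mem_ball.mp hz1) (not_lt.mpr (hcon z hz2 hzne))
  choose Fz hF1 hF2 hF3 using step
  -- a recursively defined sequence of spectrum points converging to lam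
  set P : ℂ → Prop := fun z => z ∈ spectrum ℂ M ∧ z ≠ lam ∧ dist z lam < c0 with hP
  set next : {z : ℂ // P z} → {z : ℂ // P z} := fun p =>
    ⟨Fz (dist p.1 lam) (dist_pos.mpr p.2.2.1),
     hF1 _ _, hF2 _ _, lt_trans (hF3 _ _) p.2.2.2⟩ with hnext
  set Q : ℕ → {z : ℂ // P z} :=
    fun n => next^[n] ⟨Fz c0 hc0pos, hF1 _ _, hF2 _ _, hF3 _ _⟩ with hQ
  have hQsucc : ∀ n, Q (n + 1) = next (Q n) := fun n =>
    Function.iterate_succ_apply' next n _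
  have hdlt : ∀ n, dist (Q (n + 1)).1 lam < dist (Q n).1 lam := by
    intro n
    rw [hQsucc n]
    exact hF3 _ _
  have hanti : StrictAnti (fun n => dist (Q n).1 lam) := strictAnti_nat_of_succ_lt hdlt
  set ν : ℕ → ℂ := fun n => (Q n).1 - l with hν
  have hνinj : Function.Injective ν := by
    intro i j hij
    have h1 : (Q i).1 = (Q j).1 := by
      have := congrArg (fun z : ℂ => z + l) hij
      simpa [hν] using this
    exact hanti.injective (by simp only [h1])
  have hνnorm : ∀ n, c0 ≤ ‖ν n‖ := by
    intro n
    have h1 : dist (Q n).1 lam < c0 := (Q n).2.2.2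
    have h2 : ‖lam - l‖ ≤ ‖(Q n).1 - l‖ + ‖lam - (Q n).1‖ := by
      have h3 : lam - l = ((Q n).1 - l) + (lam - (Q n).1) := by ring
      rw [h3]
      exact norm_add_le _ _
    have h3 : ‖lam - (Q n).1‖ = dist (Q n).1 lam := by rw [dist_eq_norm, norm_sub_rev]
    have h4 : ‖lam - l‖ = 2 * c0 := by rw [hc0def]; ring
    have h5 : ‖ν n‖ = ‖(Q n).1 - l‖ := by rw [hν]
    linarith
  have hν0 : ∀ n, ν n ≠ 0 := by
    intro n h
    have := hνnorm n
    rw [h, norm_zero] at this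
    linarith
  have hνspec : ∀ n, ν n ∈ spectrum ℂ K := fun n => (hspec _).mp (Q n).2.1
  have hcases := fun n => aux_spec_cases K hKc (hν0 n) (hνspec n)
  set S1 : Set ℕ := {n | ∃ x : H, x ≠ 0 ∧ K x = ν n • x} with hS1
  set S2 : Set ℕ := {n | ∃ x : H, x ≠ 0 ∧
    ContinuousLinearMap.adjoint K x = (starRingEnd ℂ) (ν n) • x} with hS2
  have hunion : S1 ∪ S2 = Set.univ := by
    ext n
    simp only [Set.mem_union, Set.mem_univ, iff_true, hS1, hS2, Set.mem_setOf_eq]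
    exact hcases n
  have hinf : S1.Infinite ∨ S2.Infinite := by
    by_contra hcon
    push_neg at hcon
    obtain ⟨h1, h2⟩ := hcon
    have hfin := h1.union h2
    rw [hunion] at hfin
    exact Set.infinite_univ hfin
  rcases hinf with h | h
  · have e := h.natEmbedding
    refine aux_eig_sep K hKc hc0pos (fun j => ν (e j).1) ?_ (fun j => hνnorm _) ?_
    · intro i j hij
      exact e.injective (Subtype.val_injective (hνinj hij))
    · intro j
      exact (e j).2
  · have e := h.natEmbedding
    refine aux_eig_sep (ContinuousLinearMap.adjoint K) hKadj hc0pos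
      (fun j => (starRingEnd ℂ) (ν (e j).1)) ?_ ?_ ?_
    · intro i j hij
      have := star_injective hij
      exact e.injective (Subtype.val_injective (hνinj this))
    · intro j
      rw [RCLike.norm_conj]
      exact hνnorm _
    · intro j
      exact (e j).2
end

section
/- Let φ be a Riesz basis for H with dual Riesz basis ψ (its canonical dual) and m ∈ ℓ^∞. Then the spectrum of M_{m,φ,ψ} equals the closure in ℂ of the set {m_n : n ∈ ℕ}. -/
open scoped InnerProductSpace

/-- For a Riesz basis `φ` with canonical (biorthogonal) dual `ψ`, the spectrum of the
multiplier `M_{m,φ,ψ}` is the closure of `{m_n : n ∈ ℕ}`. -/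
theorem stmt12 {H : Type*} [NormedAddCommGroup H] [InnerProductSpace ℂ H] [CompleteSpace H]
    (φ ψ : ℕ → H)
    (hcomplete : (Submodule.span ℂ (Set.range φ)).topologicalClosure = ⊤)
    (hRiesz : ∃ A B : ℝ, 0 < A ∧ 0 < B ∧ ∀ c : ℕ → ℂ, Memℓp c 2 →
      ∃ s : H, HasSum (fun n => c n • φ n) s ∧
        A * ∑' n, ‖c n‖ ^ 2 ≤ ‖s‖ ^ 2 ∧ ‖s‖ ^ 2 ≤ B * ∑' n, ‖c n‖ ^ 2)
    (hbiorth : ∀ n k : ℕ, ⟪ψ k, φ n⟫_ℂ = if n = k then 1 else 0)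
    (hdual : ∀ f : H, HasSum (fun n => ⟪ψ n, f⟫_ℂ • φ n) f)
    (m : ℕ → ℂ) (hm : ∃ C : ℝ, ∀ n, ‖m n‖ ≤ C)
    (M : H →L[ℂ] H)
    (hM : ∀ f : H, HasSum (fun n => m n • ⟪ψ n, f⟫_ℂ • φ n) (M f)) :
    spectrum ℂ M = closure (Set.range m) := by
  obtain ⟨A, B, hA, hB, hAB⟩ := hRiesz
  -- coefficients of a convergent expansion are recovered by ψ
  have coeff : ∀ (a : ℕ → ℂ) (s : H), HasSum (fun n => a n • φ n) s →
      ∀ k, ⟪ψ k, s⟫_ℂ = a k := by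
    intro a s hs k
    have h1 : HasSum (fun n => ⟪ψ k, a n • φ n⟫_ℂ) ⟪ψ k, s⟫_ℂ :=
      (innerSL ℂ (ψ k)).hasSum hs
    have heq : ∀ n, ⟪ψ k, a n • φ n⟫_ℂ = if n = k then a n else 0 := by
      intro n
      rw [inner_smul_right, hbiorth]
      split <;> simp
    have h2 : HasSum (fun n => ⟪ψ k, a n • φ n⟫_ℂ) (a k) := by
      have hk : ⟪ψ k, a k • φ k⟫_ℂ = a k := by rw [heq]; simp
      rw [← hk]
      exact hasSum_single k (fun n hn => by rw [heq]; simp [hn])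
    exact h1.unique h2
  -- the coefficient sequence of any vector is square-summable
  have summ : ∀ f : H, Summable (fun n => ‖⟪ψ n, f⟫_ℂ‖ ^ 2) := by
    intro f
    have h := hdual f
    have h1 : ∀ᶠ F in Filter.atTop,
        dist (∑ n ∈ F, ⟪ψ n, f⟫_ℂ • φ n) f < 1 :=
      (Metric.tendsto_nhds.mp h) 1 one_pos
    obtain ⟨F₀, hF₀⟩ := Filter.eventually_atTop.mp h1
    apply summable_of_sum_le (c := (‖f‖ + 1) ^ 2 / A) (fun n => sq_nonneg _)
    intro F
    set G := F ∪ F₀ with hG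
    set c' : ℕ → ℂ := Set.indicator (↑G) (fun n => ⟪ψ n, f⟫_ℂ) with hc'
    have hc'0 : ∀ n ∉ G, c' n = 0 := by
      intro n hn
      rw [hc']
      exact Set.indicator_of_notMem (by simpa using hn) _
    have hc'G : ∀ n ∈ G, c' n = ⟪ψ n, f⟫_ℂ := by
      intro n hn
      rw [hc']
      exact Set.indicator_of_mem (Finset.mem_coe.mpr hn) _
    have hc'mem : Memℓp c' 2 := by
      apply memℓp_gen
      apply summable_of_ne_finset_zero (s := G)
      intro n hn
      rw [hc'0 n hn, norm_zero, Real.zero_rpow (by norm_num)]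
    obtain ⟨s, hs, hlow, _⟩ := hAB c' hc'mem
    have heqsum : (∑ n ∈ G, c' n • φ n) = ∑ n ∈ G, ⟪ψ n, f⟫_ℂ • φ n :=
      Finset.sum_congr rfl (fun n hn => by rw [hc'G n hn])
    have hsum : HasSum (fun n => c' n • φ n) (∑ n ∈ G, c' n • φ n) :=
      hasSum_sum_of_ne_finset_zero (fun n hn => by rw [hc'0 n hn, zero_smul])
    have hseq : s = ∑ n ∈ G, ⟪ψ n, f⟫_ℂ • φ n := by
      rw [hs.unique hsum, heqsum]
    have hsnorm : ‖s‖ ≤ ‖f‖ + 1 := by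
      rw [hseq]
      have h2 := hF₀ G (Finset.subset_union_right)
      rw [dist_eq_norm] at h2
      have h3 := norm_sub_norm_le (∑ n ∈ G, ⟪ψ n, f⟫_ℂ • φ n) f
      linarith
    have htsum : (∑' n, ‖c' n‖ ^ 2) = ∑ n ∈ G, ‖⟪ψ n, f⟫_ℂ‖ ^ 2 := by
      rw [tsum_eq_sum (s := G) (fun n hn => by rw [hc'0 n hn, norm_zero]; norm_num)]
      exact Finset.sum_congr rfl (fun n hn => by rw [hc'G n hn])
    have hFG : (∑ n ∈ F, ‖⟪ψ n, f⟫_ℂ‖ ^ 2) ≤ ∑ n ∈ G, ‖⟪ψ n, f⟫_ℂ‖ ^ 2 :=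
      Finset.sum_le_sum_of_subset_of_nonneg Finset.subset_union_left
        (fun _ _ _ => sq_nonneg _)
    have hnorm2 : ‖s‖ ^ 2 ≤ (‖f‖ + 1) ^ 2 := by
      apply sq_le_sq' _ hsnorm
      have : (0:ℝ) ≤ ‖f‖ + 1 := by positivity
      linarith [norm_nonneg s]
    rw [htsum] at hlow
    calc (∑ n ∈ F, ‖⟪ψ n, f⟫_ℂ‖ ^ 2) ≤ ∑ n ∈ G, ‖⟪ψ n, f⟫_ℂ‖ ^ 2 := hFG
      _ ≤ (‖f‖ + 1) ^ 2 / A := by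
          rw [le_div_iff₀ hA]
          nlinarith
  -- φ n are eigenvectors
  have hφ_ne : ∀ k, φ k ≠ 0 := by
    intro k h
    have h1 := hbiorth k k
    rw [h] at h1
    simp at h1
  have hMφ : ∀ k, M (φ k) = m k • φ k := by
    intro k
    have h1 := hM (φ k)
    have heq : ∀ n, m n • ⟪ψ n, φ k⟫_ℂ • φ n = if k = n then m n • φ n else 0 := by
      intro n
      rw [hbiorth k n]
      split <;> simp
    have h2 : HasSum (fun n => m n • ⟪ψ n, φ k⟫_ℂ • φ n) (m k • φ k) := by
      have hk : m k • ⟪ψ k, φ k⟫_ℂ • φ k = m k • φ k := by rw [heq]; simp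
      rw [← hk]
      exact hasSum_single k (fun n hn => by rw [heq]; simp [(Ne.symm hn)])
    exact h1.unique h2
  have hsub1 : Set.range m ⊆ spectrum ℂ M := by
    rintro _ ⟨k, rfl⟩
    rw [spectrum.mem_iff]
    intro hunit
    have hbij := ContinuousLinearMap.isUnit_iff_bijective.mp hunit
    have h0 : (algebraMap ℂ (H →L[ℂ] H) (m k) - M) (φ k) = 0 := by
      simp [Algebra.algebraMap_eq_smul_one, hMφ k]
    have h0' : (algebraMap ℂ (H →L[ℂ] H) (m k) - M) 0 = 0 := map_zero _
    exact hφ_ne k (hbij.1 (h0.trans h0'.symm))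
  refine Set.eq_of_subset_of_subset (fun lam hl => ?_)
    ((spectrum.isClosed M).closure_subset_iff.mpr hsub1)
  by_contra hcl
  obtain ⟨δ, hδ, hdist⟩ : ∃ δ > 0, ∀ n, δ ≤ ‖lam - m n‖ := by
    rw [Metric.mem_closure_iff] at hcl
    push_neg at hcl
    obtain ⟨δ, hδ0, hd⟩ := hcl
    exact ⟨δ, hδ0, fun n => by simpa [dist_eq_norm] using hd _ ⟨n, rfl⟩⟩
  have hne : ∀ n, lam - m n ≠ 0 := by
    intro n h
    have := hdist n
    rw [h] at this
    simp at this
    linarith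
  have Tapp : ∀ f, (algebraMap ℂ (H →L[ℂ] H) lam - M) f = lam • f - M f := by
    intro f; simp [Algebra.algebraMap_eq_smul_one]
  have coeffM : ∀ f k, ⟪ψ k, M f⟫_ℂ = m k * ⟪ψ k, f⟫_ℂ := by
    intro f k
    have h1 : HasSum (fun n => (m n * ⟪ψ n, f⟫_ℂ) • φ n) (M f) := by
      have := hM f
      simpa [smul_smul] using this
    simpa using coeff _ _ h1 k
  have coeffT : ∀ f k, ⟪ψ k, lam • f - M f⟫_ℂ = (lam - m k) * ⟪ψ k, f⟫_ℂ := by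
    intro f k
    rw [inner_sub_right, inner_smul_right, coeffM]
    ring
  rw [spectrum.mem_iff] at hl
  apply hl
  rw [ContinuousLinearMap.isUnit_iff_bijective]
  constructor
  · -- injective
    intro f g hfg
    have hfg' : lam • (f - g) - M (f - g) = 0 := by
      rw [Tapp, Tapp] at hfg
      calc lam • (f - g) - M (f - g)
          = (lam • f - M f) - (lam • g - M g) := by
            rw [smul_sub, map_sub]; abel
        _ = 0 := by rw [hfg]; abel
    have hc0 : ∀ k, ⟪ψ k, f - g⟫_ℂ = 0 := by
      intro k
      have := coeffT (f - g) k
      rw [hfg'] at this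
      have h0 : (lam - m k) * ⟪ψ k, f - g⟫_ℂ = 0 := by
        rw [← this]; simp
      exact (mul_eq_zero.mp h0).resolve_left (hne k)
    have hd := hdual (f - g)
    have hfun : (fun n => ⟪ψ n, f - g⟫_ℂ • φ n) = fun _ => (0:H) := by
      funext n; rw [hc0]; simp
    rw [hfun] at hd
    have : f - g = 0 := hd.unique hasSum_zero
    rwa [sub_eq_zero] at this
  · -- surjective
    intro g
    set c : ℕ → ℂ := fun n => (lam - m n)⁻¹ * ⟪ψ n, g⟫_ℂ with hcdef
    have hcmem : Memℓp c 2 := by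
      apply memℓp_gen
      have hb : ∀ n, ‖c n‖ ^ (2:ENNReal).toReal ≤ δ⁻¹ ^ 2 * ‖⟪ψ n, g⟫_ℂ‖ ^ 2 := by
        intro n
        have h1 : ‖c n‖ ≤ δ⁻¹ * ‖⟪ψ n, g⟫_ℂ‖ := by
          have hck : c n = (lam - m n)⁻¹ * ⟪ψ n, g⟫_ℂ := rfl
          rw [hck, norm_mul, norm_inv]
          apply mul_le_mul_of_nonneg_right _ (norm_nonneg _)
          exact inv_anti₀ hδ (hdist n)
        calc ‖c n‖ ^ (2:ENNReal).toReal = ‖c n‖ ^ (2:ℕ) := by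
              rw [show ((2:ENNReal)).toReal = (2:ℝ) by norm_num, Real.rpow_two]
          _ ≤ (δ⁻¹ * ‖⟪ψ n, g⟫_ℂ‖) ^ 2 := by
              exact pow_le_pow_left₀ (norm_nonneg _) h1 2
          _ = δ⁻¹ ^ 2 * ‖⟪ψ n, g⟫_ℂ‖ ^ 2 := by ring
      exact Summable.of_nonneg_of_le (fun n => by positivity) hb ((summ g).mul_left _)
    obtain ⟨s, hs, _, _⟩ := hAB c hcmem
    refine ⟨s, ?_⟩
    rw [Tapp]
    have hcoeffs : ∀ k, ⟪ψ k, s⟫_ℂ = c k := coeff _ _ hs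
    have hcoeffTs : ∀ k, ⟪ψ k, lam • s - M s⟫_ℂ = ⟪ψ k, g⟫_ℂ := by
      intro k
      have hck : c k = (lam - m k)⁻¹ * ⟪ψ k, g⟫_ℂ := rfl
      rw [coeffT, hcoeffs k, hck, ← mul_assoc, mul_inv_cancel₀ (hne k), one_mul]
    have h1 := hdual (lam • s - M s)
    have hfun2 : (fun n => ⟪ψ n, lam • s - M s⟫_ℂ • φ n)
        = fun n => ⟪ψ n, g⟫_ℂ • φ n := by
      funext n; rw [hcoeffTs]
    rw [hfun2] at h1
    exact h1.unique (hdual g)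
end
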